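/- arXiv:2210.11393 — 6 statements merged into one kernel-verified Lean document; each statement's English description precedes it below -/
import Mathlib

section
/- Let d ≥ 2 and let M be a commuting-operator measurement on ℂ^d with r outcomes and all diagonal entries m_j⁽ⁱ⁾ > 0. Then γ(M) = max over pairs 1 ≤ k < l ≤ d of the supremum over p ∈ [0,1] of Σᵢ p(1−p)(m_k⁽ⁱ⁾ − m_l⁽ⁱ⁾)² / (p·m_k⁽ⁱ⁾ + (1−p)·m_l⁽ⁱ⁾). In particular, the supremum defining γ(M) is attained at an orthonormal pair of the form φ = √p·e_k + √(1−p)·e_l, φ⊥ = √(1−p)·e_k − √p·e_l, for some standard basis indices k < l and some p ∈ [0,1]. -/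
open scoped Matrix Kronecker ComplexOrder
open Classical

noncomputable section

/-- A density matrix: positive semidefinite with unit trace. -/
def IsDensityMatrix {n : Type*} [Fintype n] (ρ : Matrix n n ℂ) : Prop :=
  ρ.PosSemidef ∧ ρ.trace = 1

/-- A POVM with `r` outcomes. -/
def IsPOVM {n : Type*} [Fintype n] [DecidableEq n] {r : ℕ}
    (M : Fin r → Matrix n n ℂ) : Prop :=
  (∀ i, (M i).PosSemidef) ∧ ∑ i, M i = 1

/-- The Fisher information of the measurement-outcome distribution. -/
def FisherInfo {n : Type*} [Fintype n] {r : ℕ}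
    (ρ ρ' : Matrix n n ℂ) (M : Fin r → Matrix n n ℂ) : ℝ :=
  ∑ i, if (ρ * M i).trace = 0 then 0
    else ((ρ' * M i).trace.re) ^ 2 / ((ρ * M i).trace.re)

/-- A quantum channel (CPTP map) given by finitely many Kraus operators. -/
def IsQuantumChannel {m n : Type*} [Fintype m] [Fintype n] [DecidableEq m]
    (E : Matrix m m ℂ → Matrix n n ℂ) : Prop :=
  ∃ (κ : ℕ) (K : Fin κ → Matrix n m ℂ),
    (∑ j, (K j)ᴴ * K j = 1) ∧ ∀ σ, E σ = ∑ j, K j * σ * (K j)ᴴ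

/-- Quantum preprocessing-optimized Fisher information. -/
def QPFI {m n : Type*} [Fintype m] [Fintype n] [DecidableEq m] {r : ℕ}
    (ρ ρ' : Matrix m m ℂ) (M : Fin r → Matrix n n ℂ) : ℝ :=
  sSup {x : ℝ | ∃ E : Matrix m m ℂ → Matrix n n ℂ,
    IsQuantumChannel E ∧ x = FisherInfo (E ρ) (E ρ') M}

/-- Quantum unitary-preprocessing-optimized Fisher information. -/
def QUPFI {n : Type*} [Fintype n] [DecidableEq n] {r : ℕ}
    (ρ ρ' : Matrix n n ℂ) (M : Fin r → Matrix n n ℂ) : ℝ :=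
  sSup {x : ℝ | ∃ U : Matrix n n ℂ, U ∈ Matrix.unitaryGroup n ℂ ∧
    x = FisherInfo (U * ρ * Uᴴ) (U * ρ' * Uᴴ) M}

/-- Complex inner product, conjugate-linear in the first argument. -/
def cInner {n : Type*} [Fintype n] (φ ψ : n → ℂ) : ℂ := ∑ k, star (φ k) * ψ k

/-- The functional whose supremum over orthonormal pairs is the normalized QPFI. -/
def gammaSummand {n : Type*} [Fintype n] {r : ℕ}
    (M : Fin r → Matrix n n ℂ) (φ φp : n → ℂ) : ℝ :=
  ∑ i, if cInner φ (M i *ᵥ φ) = 0 then 0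
    else ((cInner φ (M i *ᵥ φp)).re) ^ 2 / ((cInner φ (M i *ᵥ φ)).re)

/-- The normalized QPFI of a POVM. -/
def gammaPOVM {n : Type*} [Fintype n] {r : ℕ} (M : Fin r → Matrix n n ℂ) : ℝ :=
  sSup {x : ℝ | ∃ φ φp : n → ℂ,
    cInner φ φ = 1 ∧ cInner φp φp = 1 ∧ cInner φ φp = 0 ∧ x = gammaSummand M φ φp}

/-- Quantum Fisher information: the Fisher information optimized over all POVMs. -/
def QFI {m : Type*} [Fintype m] [DecidableEq m] (ρ ρ' : Matrix m m ℂ) : ℝ :=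
  sSup {x : ℝ | ∃ (κ : ℕ) (T : Fin κ → Matrix m m ℂ), IsPOVM T ∧ x = FisherInfo ρ ρ' T}

/-- Classical Fisher information of a finite probability distribution. -/
def classFisher {r : ℕ} (p p' : Fin r → ℝ) : ℝ :=
  ∑ i, if p i = 0 then 0 else (p' i) ^ 2 / p i


namespace Stmt9Aux

set_option maxHeartbeats 1000000

def twoF {d r : ℕ} (m : Fin r → Fin d → ℝ) (k l : Fin d) (p : ℝ) : ℝ :=
  ∑ i, p * (1 - p) * (m i k - m i l) ^ 2 / (p * m i k + (1 - p) * m i l)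

def RHSset {d r : ℕ} (m : Fin r → Fin d → ℝ) : Set ℝ :=
  {x : ℝ | ∃ k l : Fin d, k < l ∧ ∃ p ∈ Set.Icc (0 : ℝ) 1, x = twoF m k l p}

variable {d r : ℕ} {m : Fin r → Fin d → ℝ} {M : Fin r → Matrix (Fin d) (Fin d) ℂ}

lemma den_pos (hpos : ∀ i j, 0 < m i j) (i : Fin r) (k l : Fin d) {p : ℝ}
    (hp0 : 0 ≤ p) (hp1 : p ≤ 1) : 0 < p * m i k + (1 - p) * m i l := by
  rcases lt_or_eq_of_le hp1 with h | h
  · have h1 : 0 < (1 - p) * m i l := mul_pos (by linarith) (hpos i l)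
    nlinarith [mul_nonneg hp0 (hpos i k).le]
  · have h1 : 0 < p * m i k := by rw [h]; simpa using hpos i k
    nlinarith [mul_nonneg (by linarith : (0:ℝ) ≤ 1 - p) (hpos i l).le]

lemma twoF_nonneg (hpos : ∀ i j, 0 < m i j) (k l : Fin d) {p : ℝ}
    (hp0 : 0 ≤ p) (hp1 : p ≤ 1) : 0 ≤ twoF m k l p := by
  apply Finset.sum_nonneg
  intro i _
  exact div_nonneg (mul_nonneg (mul_nonneg hp0 (by linarith)) (sq_nonneg _))
    (den_pos hpos i k l hp0 hp1).le

lemma twoF_le_one (hpos : ∀ i j, 0 < m i j) (hsum : ∀ j, ∑ i, m i j = 1)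
    (k l : Fin d) {p : ℝ} (hp0 : 0 ≤ p) (hp1 : p ≤ 1) : twoF m k l p ≤ 1 := by
  have step : twoF m k l p ≤ ∑ i, (p * m i l + (1 - p) * m i k) := by
    apply Finset.sum_le_sum
    intro i _
    rw [div_le_iff₀ (den_pos hpos i k l hp0 hp1)]
    nlinarith [mul_pos (hpos i k) (hpos i l)]
  calc twoF m k l p ≤ ∑ i, (p * m i l + (1 - p) * m i k) := step
    _ = 1 := by
      rw [Finset.sum_add_distrib, ← Finset.mul_sum, ← Finset.mul_sum, hsum l, hsum k]; ring

lemma RHS_bdd (hpos : ∀ i j, 0 < m i j) (hsum : ∀ j, ∑ i, m i j = 1) :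
    BddAbove (RHSset m) := by
  refine ⟨1, fun x hx => ?_⟩
  obtain ⟨k, l, _, p, hp, rfl⟩ := hx
  exact twoF_le_one hpos hsum k l hp.1 hp.2

lemma zero_mem_RHS (hd : 2 ≤ d) : (0 : ℝ) ∈ RHSset m := by
  refine ⟨⟨0, by omega⟩, ⟨1, by omega⟩, by simp [Fin.lt_def], 0,
    ⟨le_refl _, zero_le_one⟩, ?_⟩
  simp [twoF]

lemma twoF_symm (k l : Fin d) (p : ℝ) : twoF m k l p = twoF m l k (1 - p) := by
  unfold twoF
  refine Finset.sum_congr rfl fun i _ => ?_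
  congr 1 <;> ring

lemma twoF_le_sSup (hd : 2 ≤ d) (hpos : ∀ i j, 0 < m i j) (hsum : ∀ j, ∑ i, m i j = 1)
    {k l : Fin d} (hkl : k ≠ l) {p : ℝ} (hp0 : 0 ≤ p) (hp1 : p ≤ 1) :
    twoF m k l p ≤ sSup (RHSset m) := by
  rcases lt_or_gt_of_ne hkl with h | h
  · exact le_csSup (RHS_bdd hpos hsum) ⟨k, l, h, p, ⟨hp0, hp1⟩, rfl⟩
  · rw [twoF_symm]
    exact le_csSup (RHS_bdd hpos hsum) ⟨l, k, h, 1 - p, ⟨by linarith, by linarith⟩, rfl⟩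

lemma sSup_RHS_nonneg (hd : 2 ≤ d) (hpos : ∀ i j, 0 < m i j)
    (hsum : ∀ j, ∑ i, m i j = 1) : 0 ≤ sSup (RHSset m) :=
  le_csSup (RHS_bdd hpos hsum) (zero_mem_RHS hd)

lemma sum_pair {β : Type*} [AddCommMonoid β] {k l : Fin d} (hkl : k ≠ l) (A B : β) :
    ∑ j : Fin d, (if j = k then A else if j = l then B else 0) = A + B := by
  have h : (fun j : Fin d => if j = k then A else if j = l then B else 0)
      = fun j => (if j = k then A else 0) + (if j = l then B else 0) := by
    funext j
    by_cases h1 : j = k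
    · subst h1; simp [hkl]
    · by_cases h2 : j = l <;> simp [h1, h2, Ne.symm hkl]
  rw [h, Finset.sum_add_distrib]
  simp

lemma cInner_self_eq (φ : Fin d → ℂ) :
    cInner φ φ = ((∑ j, Complex.normSq (φ j) : ℝ) : ℂ) := by
  unfold cInner
  rw [Complex.ofReal_sum]
  refine Finset.sum_congr rfl fun j _ => ?_
  rw [Complex.star_def, ← Complex.normSq_eq_conj_mul_self]

lemma cInner_M (hMdef : ∀ i, M i = Matrix.diagonal fun j => ((m i j : ℝ) : ℂ))
    (i : Fin r) (φ ψ : Fin d → ℂ) :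
    cInner φ (M i *ᵥ ψ) = ∑ j, ((m i j : ℝ) : ℂ) * (star (φ j) * ψ j) := by
  rw [hMdef]
  unfold cInner
  refine Finset.sum_congr rfl fun j _ => ?_
  rw [Matrix.mulVec_diagonal]
  ring

lemma cInner_M_self (hMdef : ∀ i, M i = Matrix.diagonal fun j => ((m i j : ℝ) : ℂ))
    (i : Fin r) (φ : Fin d → ℂ) :
    cInner φ (M i *ᵥ φ) = ((∑ j, m i j * Complex.normSq (φ j) : ℝ) : ℂ) := by
  rw [cInner_M hMdef, Complex.ofReal_sum]
  refine Finset.sum_congr rfl fun j _ => ?_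
  rw [Complex.star_def, ← Complex.normSq_eq_conj_mul_self, ← Complex.ofReal_mul]

lemma cInner_M_re (hMdef : ∀ i, M i = Matrix.diagonal fun j => ((m i j : ℝ) : ℂ))
    (i : Fin r) (φ ψ : Fin d → ℂ) :
    (cInner φ (M i *ᵥ ψ)).re = ∑ j, m i j * (star (φ j) * ψ j).re := by
  rw [cInner_M hMdef, Complex.re_sum]
  refine Finset.sum_congr rfl fun j _ => ?_
  simp [Complex.mul_re]

lemma norm_one_of_cInner (φ : Fin d → ℂ) (hφ : cInner φ φ = 1) :
    ∑ j, Complex.normSq (φ j) = 1 := by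
  rw [cInner_self_eq] at hφ
  exact_mod_cast hφ

lemma sum_m_normSq_pos (hpos : ∀ i j, 0 < m i j) (φ : Fin d → ℂ)
    (hφ : cInner φ φ = 1) (i : Fin r) : 0 < ∑ j, m i j * Complex.normSq (φ j) := by
  have hq1 := norm_one_of_cInner φ hφ
  have hex : ∃ j, 0 < Complex.normSq (φ j) := by
    by_contra h
    push_neg at h
    have hz : ∀ j, Complex.normSq (φ j) = 0 :=
      fun j => le_antisymm (h j) (Complex.normSq_nonneg _)
    simp [hz] at hq1
  obtain ⟨j, hj⟩ := hex
  exact Finset.sum_pos' (fun j _ => mul_nonneg (hpos i j).le (Complex.normSq_nonneg _))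
    ⟨j, Finset.mem_univ j, mul_pos (hpos i j) hj⟩

lemma gammaSummand_eq (hpos : ∀ i j, 0 < m i j)
    (hMdef : ∀ i, M i = Matrix.diagonal fun j => ((m i j : ℝ) : ℂ))
    (φ φp : Fin d → ℂ) (hφ : cInner φ φ = 1) :
    gammaSummand M φ φp = ∑ i, (∑ j, m i j * (star (φ j) * φp j).re) ^ 2
      / (∑ j, m i j * Complex.normSq (φ j)) := by
  unfold gammaSummand
  refine Finset.sum_congr rfl fun i _ => ?_
  have hD := sum_m_normSq_pos hpos φ hφ i
  rw [if_neg (by rw [cInner_M_self hMdef]; exact_mod_cast hD.ne')]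
  rw [cInner_M_re hMdef, cInner_M_self hMdef, Complex.ofReal_re]

lemma easy (hpos : ∀ i j, 0 < m i j)
    (hMdef : ∀ i, M i = Matrix.diagonal fun j => ((m i j : ℝ) : ℂ))
    {k l : Fin d} (hkl : k ≠ l) {p : ℝ} (hp0 : 0 ≤ p) (hp1 : p ≤ 1) :
    cInner (fun j => if j = k then ((Real.sqrt p : ℝ) : ℂ)
        else if j = l then ((Real.sqrt (1 - p) : ℝ) : ℂ) else 0)
      (fun j => if j = k then ((Real.sqrt p : ℝ) : ℂ)
        else if j = l then ((Real.sqrt (1 - p) : ℝ) : ℂ) else 0) = 1 ∧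
    cInner (fun j => if j = k then ((Real.sqrt (1 - p) : ℝ) : ℂ)
        else if j = l then (-(Real.sqrt p : ℝ) : ℂ) else 0)
      (fun j => if j = k then ((Real.sqrt (1 - p) : ℝ) : ℂ)
        else if j = l then (-(Real.sqrt p : ℝ) : ℂ) else 0) = 1 ∧
    cInner (fun j => if j = k then ((Real.sqrt p : ℝ) : ℂ)
        else if j = l then ((Real.sqrt (1 - p) : ℝ) : ℂ) else 0)
      (fun j => if j = k then ((Real.sqrt (1 - p) : ℝ) : ℂ)
        else if j = l then (-(Real.sqrt p : ℝ) : ℂ) else 0) = 0 ∧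
    gammaSummand M
      (fun j => if j = k then ((Real.sqrt p : ℝ) : ℂ)
        else if j = l then ((Real.sqrt (1 - p) : ℝ) : ℂ) else 0)
      (fun j => if j = k then ((Real.sqrt (1 - p) : ℝ) : ℂ)
        else if j = l then (-(Real.sqrt p : ℝ) : ℂ) else 0) = twoF m k l p := by
  have hp1' : (0:ℝ) ≤ 1 - p := by linarith
  have hsp : Real.sqrt p * Real.sqrt p = p := Real.mul_self_sqrt hp0
  have hsq : Real.sqrt (1 - p) * Real.sqrt (1 - p) = 1 - p := Real.mul_self_sqrt hp1'
  have hlk : l ≠ k := Ne.symm hkl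
  set a := Real.sqrt p with ha
  set b := Real.sqrt (1 - p) with hb
  set φ : Fin d → ℂ := fun j => if j = k then ((a : ℝ) : ℂ)
      else if j = l then ((b : ℝ) : ℂ) else 0 with hφdef
  set φp : Fin d → ℂ := fun j => if j = k then ((b : ℝ) : ℂ)
      else if j = l then (-(a : ℝ) : ℂ) else 0 with hφpdef
  have φk : φ k = ((a : ℝ) : ℂ) := by simp [hφdef]
  have φl : φ l = ((b : ℝ) : ℂ) := by simp [hφdef, hlk]
  have φpk : φp k = ((b : ℝ) : ℂ) := by simp [hφpdef]
  have φpl : φp l = ((-a : ℝ) : ℂ) := by simp [hφpdef, hlk]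
  have φj : ∀ j, j ≠ k → j ≠ l → φ j = 0 := by intro j h1 h2; simp [hφdef, h1, h2]
  have φpj : ∀ j, j ≠ k → j ≠ l → φp j = 0 := by intro j h1 h2; simp [hφpdef, h1, h2]
  have star_mul : ∀ x y : ℝ, star ((x:ℝ):ℂ) * ((y:ℝ):ℂ) = ((x*y : ℝ):ℂ) := by
    intro x y
    rw [Complex.star_def, Complex.conj_ofReal, ← Complex.ofReal_mul]
  have h1 : cInner φ φ = 1 := by
    unfold cInner
    have e : ∀ j, star (φ j) * φ j
        = (if j = k then ((p:ℝ) : ℂ) else if j = l then ((1 - p : ℝ) : ℂ) else 0) := by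
      intro j
      by_cases hk : j = k
      · subst hk; rw [φk, star_mul, hsp]; simp
      · by_cases hl : j = l
        · subst hl; rw [φl, star_mul, hsq]; simp [hlk]
        · rw [φj j hk hl]; simp [hk, hl]
    rw [Finset.sum_congr rfl fun j _ => e j, sum_pair hkl]
    push_cast; ring
  have h2 : cInner φp φp = 1 := by
    unfold cInner
    have e : ∀ j, star (φp j) * φp j
        = (if j = k then ((1 - p:ℝ) : ℂ) else if j = l then ((p : ℝ) : ℂ) else 0) := by
      intro j
      by_cases hk : j = k
      · subst hk; rw [φpk, star_mul, hsq]; simp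
      · by_cases hl : j = l
        · subst hl; rw [φpl, star_mul]; rw [show -a * -a = p by nlinarith]; simp [hlk]
        · rw [φpj j hk hl]; simp [hk, hl]
    rw [Finset.sum_congr rfl fun j _ => e j, sum_pair hkl]
    push_cast; ring
  have h3 : cInner φ φp = 0 := by
    unfold cInner
    have e : ∀ j, star (φ j) * φp j
        = (if j = k then ((a * b : ℝ) : ℂ) else if j = l then ((-(a * b) : ℝ) : ℂ) else 0) := by
      intro j
      by_cases hk : j = k
      · subst hk; rw [φk, φpk, star_mul]; simp
      · by_cases hl : j = l
        · subst hl; rw [φl, φpl, star_mul]; rw [show b * -a = -(a*b) by ring]; simp [hlk]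
        · rw [φj j hk hl]; simp [hk, hl]
    rw [Finset.sum_congr rfl fun j _ => e j, sum_pair hkl]
    push_cast; ring
  refine ⟨h1, h2, h3, ?_⟩
  rw [gammaSummand_eq hpos hMdef φ φp h1]
  unfold twoF
  refine Finset.sum_congr rfl fun i _ => ?_
  have eq : ∀ j, m i j * Complex.normSq (φ j)
      = (if j = k then m i k * p else if j = l then m i l * (1 - p) else 0) := by
    intro j
    by_cases hk : j = k
    · subst hk; rw [φk, Complex.normSq_ofReal, hsp]; simp
    · by_cases hl : j = l
      · subst hl; rw [φl, Complex.normSq_ofReal, hsq]; simp [hlk]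
      · rw [φj j hk hl]; simp [hk, hl]
  have et : ∀ j, m i j * (star (φ j) * φp j).re
      = (if j = k then m i k * (a * b) else if j = l then m i l * (-(a * b)) else 0) := by
    intro j
    by_cases hk : j = k
    · subst hk; rw [φk, φpk, star_mul, Complex.ofReal_re]; simp
    · by_cases hl : j = l
      · subst hl; rw [φl, φpl, star_mul, Complex.ofReal_re,
          show b * -a = -(a*b) by ring]; simp [hlk]
      · rw [φj j hk hl]; simp [hk, hl]
  rw [Finset.sum_congr rfl fun j _ => eq j, sum_pair hkl]
  rw [Finset.sum_congr rfl fun j _ => et j, sum_pair hkl]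
  have hab : (a * b) * (a * b) = p * (1 - p) := by nlinarith
  congr 1
  · linear_combination (m i k - m i l)^2 * hab
  · ring

lemma sum_mul_q_pos (hpos : ∀ i j, 0 < m i j) (q : Fin d → ℝ)
    (hq0 : ∀ j, 0 ≤ q j) (hq1 : ∑ j, q j = 1) (i : Fin r) :
    0 < ∑ j, m i j * q j := by
  have hex : ∃ j, 0 < q j := by
    by_contra h
    push_neg at h
    have hz : ∀ j, q j = 0 := fun j => le_antisymm (h j) (hq0 j)
    simp [hz] at hq1
  obtain ⟨j, hj⟩ := hex
  exact Finset.sum_pos' (fun j _ => mul_nonneg (hpos i j).le (hq0 j))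
    ⟨j, Finset.mem_univ j, mul_pos (hpos i j) hj⟩

lemma pair_bound (hd : 2 ≤ d) (hpos : ∀ i j, 0 < m i j) (hsum : ∀ j, ∑ i, m i j = 1)
    {k l : Fin d} (hklne : k ≠ l) (c α β : ℝ) (hα : 0 < α) (hβ : 0 < β) :
    ∑ i, (c * (m i k - m i l)) ^ 2 / (α * m i k + β * m i l)
      ≤ (c ^ 2 / α + c ^ 2 / β) * sSup (RHSset m) := by
  have hw : 0 < α + β := by linarith
  have hp0 : 0 < α / (α + β) := div_pos hα hw
  have hp1 : α / (α + β) < 1 := (div_lt_one hw).mpr (by linarith)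
  have h1p : 1 - α / (α + β) = β / (α + β) := by field_simp; ring
  have hper : ∀ i : Fin r, (c * (m i k - m i l)) ^ 2 / (α * m i k + β * m i l)
      = (c ^ 2 / α + c ^ 2 / β)
        * ((α / (α + β)) * (1 - α / (α + β)) * (m i k - m i l) ^ 2
            / ((α / (α + β)) * m i k + (1 - α / (α + β)) * m i l)) := by
    intro i
    rw [h1p]
    have hmk := hpos i k
    have hml := hpos i l
    have hd2 : 0 < α * m i k + β * m i l := by positivity
    field_simp [hα.ne', hβ.ne', hw.ne', hd2.ne']
    ring
  calc ∑ i, (c * (m i k - m i l)) ^ 2 / (α * m i k + β * m i l)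
      = (c ^ 2 / α + c ^ 2 / β) * twoF m k l (α / (α + β)) := by
        rw [twoF, Finset.mul_sum]
        exact Finset.sum_congr rfl fun i _ => hper i
    _ ≤ (c ^ 2 / α + c ^ 2 / β) * sSup (RHSset m) := by
        apply mul_le_mul_of_nonneg_left (twoF_le_sSup hd hpos hsum hklne hp0.le hp1.le)
        positivity

lemma key_ineq (hd : 2 ≤ d) (hpos : ∀ i j, 0 < m i j) (hsum : ∀ j, ∑ i, m i j = 1)
    (q t u : Fin d → ℝ) (hq0 : ∀ j, 0 ≤ q j) (hu0 : ∀ j, 0 ≤ u j)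
    (hq1 : ∑ j, q j = 1) (hu1 : ∑ j, u j = 1) (ht0 : ∑ j, t j = 0)
    (htqu : ∀ j, t j ^ 2 ≤ q j * u j) :
    ∑ i, (∑ j, m i j * t j) ^ 2 / (∑ j, m i j * q j) ≤ sSup (RHSset m) := by
  have hG0 : 0 ≤ sSup (RHSset m) := sSup_RHS_nonneg hd hpos hsum
  by_cases htz : ∀ j, t j = 0
  · have e : ∀ i : Fin r, (∑ j, m i j * t j) ^ 2 / (∑ j, m i j * q j) = 0 := by
      intro i; simp [htz]
    rw [Finset.sum_congr rfl fun i _ => e i]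
    simpa using hG0
  push_neg at htz
  obtain ⟨j0, hj0⟩ := htz
  set P := Finset.univ.filter (fun j : Fin d => 0 < t j) with hPdef
  set N := Finset.univ.filter (fun j : Fin d => t j < 0) with hNdef
  have memP : ∀ j ∈ P, 0 < t j := fun j hj => (Finset.mem_filter.mp hj).2
  have memN : ∀ j ∈ N, t j < 0 := fun j hj => (Finset.mem_filter.mp hj).2
  have hPne : P.Nonempty := by
    by_contra h
    rw [Finset.not_nonempty_iff_eq_empty] at h
    have hall : ∀ j : Fin d, t j ≤ 0 := by
      intro j
      by_contra hj
      push_neg at hj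
      have hmem : j ∈ P := by simp [hPdef, hj]
      simp [h] at hmem
    have hz := (Finset.sum_eq_zero_iff_of_nonpos (fun j _ => hall j)).mp ht0
    exact hj0 (hz j0 (Finset.mem_univ _))
  have hNne : N.Nonempty := by
    by_contra h
    rw [Finset.not_nonempty_iff_eq_empty] at h
    have hall : ∀ j : Fin d, 0 ≤ t j := by
      intro j
      by_contra hj
      push_neg at hj
      have hmem : j ∈ N := by simp [hNdef, hj]
      simp [h] at hmem
    have hz := (Finset.sum_eq_zero_iff_of_nonneg (fun j _ => hall j)).mp ht0
    exact hj0 (hz j0 (Finset.mem_univ _))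
  have hdisj : Disjoint P N := by
    rw [Finset.disjoint_left]
    intro a haP haN
    have h1 := memP a haP
    have h2 := memN a haN
    linarith
  set S := ∑ j ∈ P, t j with hSdef
  have hS : 0 < S := Finset.sum_pos memP hPne
  -- sum over N of t equals -S
  have hNS : ∑ j ∈ N, t j = -S := by
    have hsplit := Finset.sum_filter_add_sum_filter_not Finset.univ
      (fun j : Fin d => 0 < t j) t
    have hNsub : N ⊆ Finset.univ.filter (fun j : Fin d => ¬ 0 < t j) := by
      intro j hj
      have := memN j hj
      simp only [Finset.mem_filter, Finset.mem_univ, true_and]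
      linarith
    have h2 : ∑ j ∈ Finset.univ.filter (fun j : Fin d => ¬ 0 < t j), t j
        = ∑ j ∈ N, t j := by
      symm
      apply Finset.sum_subset hNsub
      intro x hx hnx
      simp only [Finset.mem_filter, Finset.mem_univ, true_and, not_lt] at hx
      have hxn : ¬ t x < 0 := by
        intro hlt
        exact hnx (by simp [hNdef, hlt])
      linarith
    rw [h2, ht0] at hsplit
    linarith
  have hqP : ∀ j, t j ≠ 0 → 0 < q j := by
    intro j hj
    rcases (hq0 j).lt_or_eq with h | h
    · exact h
    · exfalso
      apply hj
      have h1 : t j ^ 2 ≤ 0 := by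
        have := htqu j
        nlinarith [hu0 j]
      have h2 : t j ^ 2 = 0 := le_antisymm h1 (sq_nonneg _)
      exact pow_eq_zero_iff two_ne_zero |>.mp h2
  -- product-sum helper
  have prod_sum : ∀ g h : Fin d → ℝ,
      ∑ kl ∈ P ×ˢ N, g kl.1 * h kl.2 = (∑ k ∈ P, g k) * (∑ l ∈ N, h l) := by
    intro g h
    rw [Finset.sum_product, Finset.sum_mul_sum]
  have hone1 : ∑ l ∈ N, -t l * S⁻¹ = 1 := by
    have : ∑ l ∈ N, -t l * S⁻¹ = (∑ l ∈ N, -t l) * S⁻¹ := by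
      rw [Finset.sum_mul]
    rw [this]
    have : ∑ l ∈ N, -t l = S := by
      rw [Finset.sum_neg_distrib, hNS]; ring
    rw [this, mul_inv_cancel₀ hS.ne']
  have hone2 : ∑ k ∈ P, t k * S⁻¹ = 1 := by
    have h1 : ∑ k ∈ P, t k * S⁻¹ = (∑ k ∈ P, t k) * S⁻¹ := by rw [Finset.sum_mul]
    rw [h1, ← hSdef, mul_inv_cancel₀ hS.ne']
  -- support decomposition for sums weighted by t
  have supp_t : ∀ f : Fin d → ℝ, ∑ j, f j * t j
      = ∑ j ∈ P, f j * t j + ∑ j ∈ N, f j * t j := by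
    intro f
    rw [← Finset.sum_union hdisj]
    symm
    apply Finset.sum_subset (Finset.subset_univ _)
    intro x _ hx
    simp only [Finset.mem_union, hPdef, hNdef, Finset.mem_filter, Finset.mem_univ,
      true_and, not_or, not_lt] at hx
    have : t x = 0 := le_antisymm hx.1 hx.2
    rw [this, mul_zero]
  have supp_q_le : ∀ i, ∑ j ∈ P, m i j * q j + ∑ j ∈ N, m i j * q j
      ≤ ∑ j, m i j * q j := by
    intro i
    rw [← Finset.sum_union hdisj]
    apply Finset.sum_le_sum_of_subset_of_nonneg (Finset.subset_univ _)
    intro j _ _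
    exact mul_nonneg (hpos i j).le (hq0 j)
  -- numerator decomposition
  have stepN : ∀ i, ∑ j, m i j * t j
      = ∑ kl ∈ P ×ˢ N, (t kl.1 * -t kl.2 / S) * (m i kl.1 - m i kl.2) := by
    intro i
    have e1 : ∑ kl ∈ P ×ˢ N, (t kl.1 * -t kl.2 / S) * (m i kl.1 - m i kl.2)
        = ∑ kl ∈ P ×ˢ N, ((m i kl.1 * t kl.1 * S⁻¹) * (-t kl.2)
            + (t kl.1 * S⁻¹) * (m i kl.2 * t kl.2)) := by
      refine Finset.sum_congr rfl fun kl _ => ?_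
      field_simp
      ring
    rw [e1, Finset.sum_add_distrib,
      prod_sum (fun k => m i k * t k * S⁻¹) (fun l => -t l),
      prod_sum (fun k => t k * S⁻¹) (fun l => m i l * t l)]
    have e2 : ∑ l ∈ N, -t l = S := by rw [Finset.sum_neg_distrib, hNS]; ring
    rw [e2, hone2, supp_t (fun j => m i j)]
    have e3 : ∑ k ∈ P, m i k * t k * S⁻¹ = (∑ k ∈ P, m i k * t k) * S⁻¹ := by
      rw [Finset.sum_mul]
    rw [e3]
    field_simp
  -- denominator pieces
  set dden : Fin r → Fin d × Fin d → ℝ :=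
    fun i kl => (-t kl.2 / S * q kl.1) * m i kl.1 + (t kl.1 / S * q kl.2) * m i kl.2
    with hddendef
  have hqmemP : ∀ kl ∈ P ×ˢ N, 0 < q kl.1 ∧ 0 < q kl.2 ∧ 0 < t kl.1 ∧ t kl.2 < 0 := by
    intro kl hkl
    rw [Finset.mem_product] at hkl
    have h1 := memP _ hkl.1
    have h2 := memN _ hkl.2
    exact ⟨hqP _ h1.ne', hqP _ h2.ne, h1, h2⟩
  have hdden_pos : ∀ i, ∀ kl ∈ P ×ˢ N, 0 < dden i kl := by
    intro i kl hkl
    obtain ⟨hkq1, hkq2, hkt1, hkt2⟩ := hqmemP kl hkl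
    have ha : 0 < -t kl.2 / S * q kl.1 := mul_pos (div_pos (by linarith) hS) hkq1
    have hb : 0 < t kl.1 / S * q kl.2 := mul_pos (div_pos hkt1 hS) hkq2
    have := hpos i kl.1
    have := hpos i kl.2
    simp only [hddendef]
    nlinarith
  have stepB : ∀ i, ∑ kl ∈ P ×ˢ N, dden i kl
      = ∑ j ∈ P, m i j * q j + ∑ j ∈ N, m i j * q j := by
    intro i
    have e1 : ∑ kl ∈ P ×ˢ N, dden i kl
        = ∑ kl ∈ P ×ˢ N, ((m i kl.1 * q kl.1) * (-t kl.2 * S⁻¹)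
            + (t kl.1 * S⁻¹) * (m i kl.2 * q kl.2)) := by
      refine Finset.sum_congr rfl fun kl _ => ?_
      simp only [hddendef]
      field_simp
    rw [e1, Finset.sum_add_distrib,
      prod_sum (fun k => m i k * q k) (fun l => -t l * S⁻¹),
      prod_sum (fun k => t k * S⁻¹) (fun l => m i l * q l), hone1, hone2]
    ring
  -- per-outcome Engel bound
  have stepC : ∀ i, (∑ j, m i j * t j) ^ 2 / (∑ j, m i j * q j)
      ≤ ∑ kl ∈ P ×ˢ N, (t kl.1 * -t kl.2 / S * (m i kl.1 - m i kl.2)) ^ 2 / dden i kl := by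
    intro i
    have hB : 0 < ∑ kl ∈ P ×ˢ N, dden i kl :=
      Finset.sum_pos (hdden_pos i) (hPne.product hNne)
    have hBD : ∑ kl ∈ P ×ˢ N, dden i kl ≤ ∑ j, m i j * q j := by
      rw [stepB i]; exact supp_q_le i
    calc (∑ j, m i j * t j) ^ 2 / (∑ j, m i j * q j)
        ≤ (∑ j, m i j * t j) ^ 2 / (∑ kl ∈ P ×ˢ N, dden i kl) :=
          div_le_div_of_nonneg_left (sq_nonneg _) hB hBD
      _ = (∑ kl ∈ P ×ˢ N, t kl.1 * -t kl.2 / S * (m i kl.1 - m i kl.2)) ^ 2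
            / (∑ kl ∈ P ×ˢ N, dden i kl) := by rw [← stepN i]
      _ ≤ _ := Finset.sq_sum_div_le_sum_sq_div _ _ (hdden_pos i)
  -- per-pair bound
  have step4 : ∀ kl ∈ P ×ˢ N,
      ∑ i, (t kl.1 * -t kl.2 / S * (m i kl.1 - m i kl.2)) ^ 2 / dden i kl
        ≤ ((t kl.1 * -t kl.2 / S) ^ 2 / (-t kl.2 / S * q kl.1)
            + (t kl.1 * -t kl.2 / S) ^ 2 / (t kl.1 / S * q kl.2)) * sSup (RHSset m) := by
    intro kl hkl
    obtain ⟨hkq1, hkq2, hkt1, hkt2⟩ := hqmemP kl hkl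
    have hklne : kl.1 ≠ kl.2 := fun h => by rw [h] at hkt1; linarith
    have hα : 0 < -t kl.2 / S * q kl.1 := mul_pos (div_pos (by linarith) hS) hkq1
    have hβ : 0 < t kl.1 / S * q kl.2 := mul_pos (div_pos hkt1 hS) hkq2
    exact pair_bound hd hpos hsum hklne _ _ _ hα hβ
  -- total mass bound
  have stepE : ∑ kl ∈ P ×ˢ N,
      ((t kl.1 * -t kl.2 / S) ^ 2 / (-t kl.2 / S * q kl.1)
        + (t kl.1 * -t kl.2 / S) ^ 2 / (t kl.1 / S * q kl.2)) ≤ 1 := by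
    have e1 : ∀ kl ∈ P ×ˢ N,
        (t kl.1 * -t kl.2 / S) ^ 2 / (-t kl.2 / S * q kl.1)
          + (t kl.1 * -t kl.2 / S) ^ 2 / (t kl.1 / S * q kl.2)
        = (t kl.1 ^ 2 / q kl.1) * (-t kl.2 * S⁻¹)
          + (t kl.1 * S⁻¹) * (t kl.2 ^ 2 / q kl.2) := by
      intro kl hkl
      obtain ⟨hkq1, hkq2, hkt1, hkt2⟩ := hqmemP kl hkl
      have h1 : t kl.2 ≠ 0 := hkt2.ne
      field_simp
    rw [Finset.sum_congr rfl e1, Finset.sum_add_distrib,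
      prod_sum (fun k => t k ^ 2 / q k) (fun l => -t l * S⁻¹),
      prod_sum (fun k => t k * S⁻¹) (fun l => t l ^ 2 / q l), hone1, hone2]
    have hle : ∀ (s : Finset (Fin d)) (hs : ∀ j ∈ s, t j ≠ 0),
        ∑ j ∈ s, t j ^ 2 / q j ≤ ∑ j ∈ s, u j := by
      intro s hs
      apply Finset.sum_le_sum
      intro j hj
      rw [div_le_iff₀ (hqP j (hs j hj))]
      nlinarith [htqu j]
    have hP' := hle P (fun j hj => (memP j hj).ne')
    have hN' := hle N (fun j hj => (memN j hj).ne)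
    have hsub : ∑ j ∈ P, u j + ∑ j ∈ N, u j ≤ 1 := by
      rw [← Finset.sum_union hdisj, ← hu1]
      exact Finset.sum_le_sum_of_subset_of_nonneg (Finset.subset_univ _)
        (fun j _ _ => hu0 j)
    linarith
  -- assemble
  calc ∑ i, (∑ j, m i j * t j) ^ 2 / (∑ j, m i j * q j)
      ≤ ∑ i, ∑ kl ∈ P ×ˢ N,
          (t kl.1 * -t kl.2 / S * (m i kl.1 - m i kl.2)) ^ 2 / dden i kl :=
        Finset.sum_le_sum fun i _ => stepC i
    _ = ∑ kl ∈ P ×ˢ N, ∑ i,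
          (t kl.1 * -t kl.2 / S * (m i kl.1 - m i kl.2)) ^ 2 / dden i kl :=
        Finset.sum_comm
    _ ≤ ∑ kl ∈ P ×ˢ N,
          ((t kl.1 * -t kl.2 / S) ^ 2 / (-t kl.2 / S * q kl.1)
            + (t kl.1 * -t kl.2 / S) ^ 2 / (t kl.1 / S * q kl.2)) * sSup (RHSset m) :=
        Finset.sum_le_sum step4
    _ = (∑ kl ∈ P ×ˢ N,
          ((t kl.1 * -t kl.2 / S) ^ 2 / (-t kl.2 / S * q kl.1)
            + (t kl.1 * -t kl.2 / S) ^ 2 / (t kl.1 / S * q kl.2))) * sSup (RHSset m) := by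
        rw [Finset.sum_mul]
    _ ≤ 1 * sSup (RHSset m) := mul_le_mul_of_nonneg_right stepE hG0
    _ = sSup (RHSset m) := one_mul _

lemma t_sum_zero (φ φp : Fin d → ℂ) (horth : cInner φ φp = 0) :
    ∑ j, (star (φ j) * φp j).re = 0 := by
  have h := congrArg Complex.re horth
  rw [show (0:ℂ).re = 0 from rfl] at h
  rw [← h]
  unfold cInner
  rw [Complex.re_sum]

lemma t_sq_le (φ φp : Fin d → ℂ) (j : Fin d) :
    (star (φ j) * φp j).re ^ 2 ≤ Complex.normSq (φ j) * Complex.normSq (φp j) := by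
  have h1 : (star (φ j) * φp j).re ^ 2 ≤ Complex.normSq (star (φ j) * φp j) := by
    rw [Complex.normSq_apply]
    nlinarith [mul_self_nonneg (star (φ j) * φp j).im]
  rwa [Complex.normSq_mul, Complex.star_def, Complex.normSq_conj] at h1

lemma exists_max (hd : 2 ≤ d) (hpos : ∀ i j, 0 < m i j) (hsum : ∀ j, ∑ i, m i j = 1) :
    ∃ k l : Fin d, k < l ∧ ∃ p : ℝ, 0 ≤ p ∧ p ≤ 1 ∧ twoF m k l p = sSup (RHSset m) := by
  have hcont : ∀ k l : Fin d, ContinuousOn (twoF m k l) (Set.Icc (0:ℝ) 1) := by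
    intro k l
    apply continuousOn_finset_sum
    intro i _
    exact ContinuousOn.div (Continuous.continuousOn (by fun_prop))
      (Continuous.continuousOn (by fun_prop))
      (fun p hp => (den_pos hpos i k l hp.1 hp.2).ne')
  have hmax : ∀ kl : Fin d × Fin d, ∃ p, (p ∈ Set.Icc (0:ℝ) 1) ∧
      ∀ x ∈ Set.Icc (0:ℝ) 1, twoF m kl.1 kl.2 x ≤ twoF m kl.1 kl.2 p := by
    intro kl
    obtain ⟨p, hp, hm⟩ := isCompact_Icc.exists_isMaxOn
      (Set.nonempty_Icc.mpr zero_le_one) (hcont kl.1 kl.2)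
    exact ⟨p, hp, fun x hx => hm hx⟩
  choose pf hpf hmaxf using hmax
  set pairs : Finset (Fin d × Fin d) := Finset.univ.filter (fun kl => kl.1 < kl.2)
    with hpairs
  have hpairsne : pairs.Nonempty := by
    refine ⟨(⟨0, by omega⟩, ⟨1, by omega⟩), ?_⟩
    rw [hpairs, Finset.mem_filter]
    exact ⟨Finset.mem_univ _, Fin.mk_lt_mk.mpr one_pos⟩
  obtain ⟨kl, hklmem, hklmax⟩ := Finset.exists_max_image pairs
    (fun kl => twoF m kl.1 kl.2 (pf kl)) hpairsne
  have hkl : kl.1 < kl.2 := (Finset.mem_filter.mp hklmem).2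
  refine ⟨kl.1, kl.2, hkl, pf kl, (hpf kl).1, (hpf kl).2, ?_⟩
  apply le_antisymm
  · exact le_csSup (RHS_bdd hpos hsum) ⟨kl.1, kl.2, hkl, pf kl, hpf kl, rfl⟩
  · apply csSup_le ⟨0, zero_mem_RHS hd⟩
    rintro x ⟨k, l, hkl', p, hp, rfl⟩
    calc twoF m k l p ≤ twoF m k l (pf (k, l)) := hmaxf (k, l) p hp
      _ ≤ twoF m kl.1 kl.2 (pf kl) := hklmax (k, l)
          (by rw [hpairs, Finset.mem_filter]; exact ⟨Finset.mem_univ _, hkl'⟩)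

lemma hard (hd : 2 ≤ d) (hpos : ∀ i j, 0 < m i j) (hsum : ∀ j, ∑ i, m i j = 1)
    (hMdef : ∀ i, M i = Matrix.diagonal fun j => ((m i j : ℝ) : ℂ))
    (φ φp : Fin d → ℂ) (hφ : cInner φ φ = 1) (hφp : cInner φp φp = 1)
    (horth : cInner φ φp = 0) :
    gammaSummand M φ φp ≤ sSup (RHSset m) := by
  rw [gammaSummand_eq hpos hMdef φ φp hφ]
  exact key_ineq hd hpos hsum (fun j => Complex.normSq (φ j))
    (fun j => (star (φ j) * φp j).re) (fun j => Complex.normSq (φp j))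
    (fun j => Complex.normSq_nonneg _) (fun j => Complex.normSq_nonneg _)
    (norm_one_of_cInner φ hφ) (norm_one_of_cInner φp hφp)
    (t_sum_zero φ φp horth) (t_sq_le φ φp)

end Stmt9Aux

/-- for a commuting-operator measurement with strictly positive diagonal
entries, the normalized QPFI equals the maximum over pairs `k < l` of basis indices of the
supremum over `p ∈ [0,1]` of the two-level Fisher information ratio, and it is attained at
an orthonormal pair supported on two basis states. -/
theorem stmt9 {d r : ℕ} (hd : 2 ≤ d) (hr : 1 ≤ r)
    (m : Fin r → Fin d → ℝ) (hpos : ∀ i j, 0 < m i j) (hsum : ∀ j, ∑ i, m i j = 1)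
    (M : Fin r → Matrix (Fin d) (Fin d) ℂ)
    (hMdef : ∀ i, M i = Matrix.diagonal fun j => ((m i j : ℝ) : ℂ)) :
    gammaPOVM M = sSup {x : ℝ | ∃ k l : Fin d, k < l ∧ ∃ p ∈ Set.Icc (0 : ℝ) 1,
        x = ∑ i, p * (1 - p) * (m i k - m i l) ^ 2 / (p * m i k + (1 - p) * m i l)}
    ∧ ∃ k l : Fin d, k < l ∧ ∃ p ∈ Set.Icc (0 : ℝ) 1,
        gammaSummand M
          (fun j => if j = k then ((Real.sqrt p : ℝ) : ℂ)
            else if j = l then ((Real.sqrt (1 - p) : ℝ) : ℂ) else 0)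
          (fun j => if j = k then ((Real.sqrt (1 - p) : ℝ) : ℂ)
            else if j = l then (-(Real.sqrt p : ℝ) : ℂ) else 0)
        = gammaPOVM M := by
  classical
  have hmain : gammaPOVM M = sSup (Stmt9Aux.RHSset m) := by
    have hbddL : BddAbove {x : ℝ | ∃ φ φp : Fin d → ℂ,
        cInner φ φ = 1 ∧ cInner φp φp = 1 ∧ cInner φ φp = 0 ∧ x = gammaSummand M φ φp} := by
      refine ⟨sSup (Stmt9Aux.RHSset m), ?_⟩
      rintro x ⟨φ, φp, h1, h2, h3, rfl⟩
      exact Stmt9Aux.hard hd hpos hsum hMdef φ φp h1 h2 h3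
    have hne01 : (⟨0, by omega⟩ : Fin d) ≠ (⟨1, by omega⟩ : Fin d) := by
      simp [Fin.ext_iff]
    have hneL : Set.Nonempty {x : ℝ | ∃ φ φp : Fin d → ℂ,
        cInner φ φ = 1 ∧ cInner φp φp = 1 ∧ cInner φ φp = 0 ∧ x = gammaSummand M φ φp} := by
      obtain ⟨h1, h2, h3, _⟩ := Stmt9Aux.easy hpos hMdef hne01 (le_refl (0:ℝ)) zero_le_one
      exact ⟨_, _, _, h1, h2, h3, rfl⟩
    apply le_antisymm
    · apply csSup_le hneL
      rintro x ⟨φ, φp, h1, h2, h3, rfl⟩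
      exact Stmt9Aux.hard hd hpos hsum hMdef φ φp h1 h2 h3
    · apply csSup_le ⟨0, Stmt9Aux.zero_mem_RHS hd⟩
      rintro x ⟨k, l, hkl, p, hp, rfl⟩
      obtain ⟨h1, h2, h3, h4⟩ := Stmt9Aux.easy hpos hMdef hkl.ne hp.1 hp.2
      exact le_csSup hbddL ⟨_, _, h1, h2, h3, h4.symm⟩
  constructor
  · exact hmain
  · obtain ⟨k, l, hkl, p, hp0, hp1, heq⟩ := Stmt9Aux.exists_max hd hpos hsum
    refine ⟨k, l, hkl, p, ⟨hp0, hp1⟩, ?_⟩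
    obtain ⟨h1, h2, h3, h4⟩ := Stmt9Aux.easy hpos hMdef hkl.ne hp0 hp1
    rw [h4, heq, hmain]
end
end

section
/- Let r ≥ 1 and a, b ∈ ℝ^r with aᵢ > 0 and bᵢ > 0 for all i, Σᵢ aᵢ = Σᵢ bᵢ = 1, and a ≠ b. Then there is exactly one p ∈ (0,1) satisfying Σᵢ aᵢ(aᵢ−bᵢ)² / (aᵢ + ((1−p)/p)·bᵢ)² = Σᵢ bᵢ(aᵢ−bᵢ)² / ((p/(1−p))·aᵢ + bᵢ)², and the function g(q) = Σᵢ q(1−q)(aᵢ−bᵢ)² / (q·aᵢ + (1−q)·bᵢ) attains its maximum over [0,1] at this p and at no other point of [0,1]. -/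
open scoped Matrix Kronecker ComplexOrder
open Classical

noncomputable section

/-- Auxiliary: the two-level Fisher information function. -/
def auxG {r : ℕ} (a b : Fin r → ℝ) (q : ℝ) : ℝ :=
  ∑ i, q * (1 - q) * (a i - b i) ^ 2 / (q * a i + (1 - q) * b i)

/-- Auxiliary: the derivative of `auxG`. -/
def auxH {r : ℕ} (a b : Fin r → ℝ) (q : ℝ) : ℝ :=
  ∑ i, (a i - b i) ^ 2 * (b i * (1 - q) ^ 2 - a i * q ^ 2) / (q * a i + (1 - q) * b i) ^ 2

lemma aux_dpos {a b q : ℝ} (ha : 0 < a) (hb : 0 < b) (h0 : 0 ≤ q) (h1 : q ≤ 1) :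
    0 < q * a + (1 - q) * b := by
  rcases eq_or_lt_of_le h0 with h | h
  · nlinarith
  · nlinarith [mul_pos h ha, mul_nonneg (sub_nonneg.2 h1) hb.le]

lemma aux_term_key {a b q1 q2 : ℝ} (ha : 0 < a) (hb : 0 < b)
    (h01 : 0 ≤ q1) (h11 : q1 ≤ 1) (h02 : 0 ≤ q2) (h12 : q2 ≤ 1) :
    (a - b) ^ 2 * (b * (1 - q1) ^ 2 - a * q1 ^ 2) / (q1 * a + (1 - q1) * b) ^ 2
      - (a - b) ^ 2 * (b * (1 - q2) ^ 2 - a * q2 ^ 2) / (q2 * a + (1 - q2) * b) ^ 2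
    = (a - b) ^ 2 * (a * b) * (q2 - q1)
        * ((q1 * a + (1 - q1) * b) + (q2 * a + (1 - q2) * b))
        / ((q1 * a + (1 - q1) * b) ^ 2 * (q2 * a + (1 - q2) * b) ^ 2) := by
  have d1 := (aux_dpos ha hb h01 h11).ne'
  have d2 := (aux_dpos ha hb h02 h12).ne'
  rw [div_sub_div _ _ (pow_ne_zero 2 d1) (pow_ne_zero 2 d2), div_eq_div_iff (mul_ne_zero (pow_ne_zero 2 d1) (pow_ne_zero 2 d2)) (mul_ne_zero (pow_ne_zero 2 d1) (pow_ne_zero 2 d2))]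
  ring

lemma auxH_strictAntiOn {r : ℕ} {a b : Fin r → ℝ} (ha : ∀ i, 0 < a i) (hb : ∀ i, 0 < b i)
    (i0 : Fin r) (hi0 : a i0 ≠ b i0) :
    StrictAntiOn (auxH a b) (Set.Icc 0 1) := by
  intro q1 hq1 q2 hq2 hlt
  unfold auxH
  apply Finset.sum_lt_sum
  · intro i _
    have key := aux_term_key (ha i) (hb i) hq1.1 hq1.2 hq2.1 hq2.2
    have d1 := aux_dpos (ha i) (hb i) hq1.1 hq1.2
    have d2 := aux_dpos (ha i) (hb i) hq2.1 hq2.2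
    have hnn : 0 ≤ (a i - b i) ^ 2 * (a i * b i) * (q2 - q1)
        * ((q1 * a i + (1 - q1) * b i) + (q2 * a i + (1 - q2) * b i))
        / ((q1 * a i + (1 - q1) * b i) ^ 2 * (q2 * a i + (1 - q2) * b i) ^ 2) := by
      apply div_nonneg
      · exact mul_nonneg (mul_nonneg (mul_nonneg (sq_nonneg _)
          (mul_pos (ha i) (hb i)).le) (sub_pos.2 hlt).le) (add_pos d1 d2).le
      · exact (mul_pos (pow_pos d1 2) (pow_pos d2 2)).le
    linarith [key, hnn]
  · refine ⟨i0, Finset.mem_univ _, ?_⟩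
    have key := aux_term_key (ha i0) (hb i0) hq1.1 hq1.2 hq2.1 hq2.2
    have d1 := aux_dpos (ha i0) (hb i0) hq1.1 hq1.2
    have d2 := aux_dpos (ha i0) (hb i0) hq2.1 hq2.2
    have hsq : 0 < (a i0 - b i0) ^ 2 :=
      lt_of_le_of_ne (sq_nonneg _) (Ne.symm (pow_ne_zero 2 (sub_ne_zero.2 hi0)))
    have hpos : 0 < (a i0 - b i0) ^ 2 * (a i0 * b i0) * (q2 - q1)
        * ((q1 * a i0 + (1 - q1) * b i0) + (q2 * a i0 + (1 - q2) * b i0))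
        / ((q1 * a i0 + (1 - q1) * b i0) ^ 2 * (q2 * a i0 + (1 - q2) * b i0) ^ 2) := by
      apply div_pos
      · exact mul_pos (mul_pos (mul_pos hsq (mul_pos (ha i0) (hb i0)))
          (sub_pos.2 hlt)) (add_pos d1 d2)
      · exact mul_pos (pow_pos d1 2) (pow_pos d2 2)
    linarith [key, hpos]

lemma auxG_hasDerivAt {r : ℕ} (a b : Fin r → ℝ) {x : ℝ}
    (hd : ∀ i, x * a i + (1 - x) * b i ≠ 0) :
    HasDerivAt (auxG a b) (auxH a b x) x := by
  unfold auxG auxH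
  apply HasDerivAt.fun_sum
  intro i _
  have hnum : HasDerivAt (fun q : ℝ => q * (1 - q) * (a i - b i) ^ 2)
      ((1 - 2 * x) * (a i - b i) ^ 2) x := by
    have h1 : HasDerivAt (fun q : ℝ => q * (1 - q)) (1 - 2 * x) x := by
      have h := (hasDerivAt_id x).fun_mul ((hasDerivAt_const x (1 : ℝ)).fun_sub (hasDerivAt_id x))
      simp only [id_eq] at h
      refine h.congr_deriv ?_
      ring
    simpa using h1.mul_const ((a i - b i) ^ 2)
  have hden : HasDerivAt (fun q : ℝ => q * a i + (1 - q) * b i) (a i - b i) x := by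
    have h := ((hasDerivAt_id x).mul_const (a i)).fun_add
      (((hasDerivAt_const x (1 : ℝ)).fun_sub (hasDerivAt_id x)).mul_const (b i))
    simp only [id_eq] at h
    refine h.congr_deriv ?_
    ring
  have h := hnum.fun_div hden (hd i)
  refine h.congr_deriv ?_
  field_simp [hd i]
  ring

lemma auxG_continuousOn {r : ℕ} {a b : Fin r → ℝ} (ha : ∀ i, 0 < a i) (hb : ∀ i, 0 < b i) :
    ContinuousOn (auxG a b) (Set.Icc 0 1) := by
  unfold auxG
  apply continuousOn_finset_sum
  intro i _
  exact ContinuousOn.div (by fun_prop) (by fun_prop)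
    (fun q hq => (aux_dpos (ha i) (hb i) hq.1 hq.2).ne')

lemma auxH_continuousOn {r : ℕ} {a b : Fin r → ℝ} (ha : ∀ i, 0 < a i) (hb : ∀ i, 0 < b i) :
    ContinuousOn (auxH a b) (Set.Icc 0 1) := by
  unfold auxH
  apply continuousOn_finset_sum
  intro i _
  exact ContinuousOn.div (by fun_prop) (by fun_prop)
    (fun q hq => pow_ne_zero 2 (aux_dpos (ha i) (hb i) hq.1 hq.2).ne')

/-- uniqueness of the optimal two-level superposition weight: there is exactly
one `p ∈ (0,1)` solving the criticality equation, and the two-level Fisher information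
function `g` attains its maximum over `[0,1]` at this `p` and at no other point. -/
theorem stmt10 {r : ℕ} (hr : 1 ≤ r) (a b : Fin r → ℝ)
    (ha : ∀ i, 0 < a i) (hb : ∀ i, 0 < b i)
    (hsa : ∑ i, a i = 1) (hsb : ∑ i, b i = 1) (hab : a ≠ b) :
    ∃ p ∈ Set.Ioo (0 : ℝ) 1,
      (∑ i, a i * (a i - b i) ^ 2 / (a i + ((1 - p) / p) * b i) ^ 2
        = ∑ i, b i * (a i - b i) ^ 2 / ((p / (1 - p)) * a i + b i) ^ 2)
      ∧ (∀ q ∈ Set.Ioo (0 : ℝ) 1,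
          (∑ i, a i * (a i - b i) ^ 2 / (a i + ((1 - q) / q) * b i) ^ 2
            = ∑ i, b i * (a i - b i) ^ 2 / ((q / (1 - q)) * a i + b i) ^ 2) → q = p)
      ∧ (∀ q ∈ Set.Icc (0 : ℝ) 1, q ≠ p →
          ∑ i, q * (1 - q) * (a i - b i) ^ 2 / (q * a i + (1 - q) * b i)
            < ∑ i, p * (1 - p) * (a i - b i) ^ 2 / (p * a i + (1 - p) * b i)) := by
  obtain ⟨i0, hi0⟩ : ∃ i, a i ≠ b i := by
    by_contra h
    push_neg at h
    exact hab (funext h)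
  have hanti := auxH_strictAntiOn ha hb i0 hi0
  have hHc := auxH_continuousOn ha hb
  have hGc := auxG_continuousOn ha hb
  have hH0 : 0 < auxH a b 0 := by
    unfold auxH
    apply Finset.sum_pos'
    · intro i _
      have hbi := hb i
      norm_num
      positivity
    · refine ⟨i0, Finset.mem_univ _, ?_⟩
      have hbi := hb i0
      have hne : a i0 - b i0 ≠ 0 := sub_ne_zero.2 hi0
      have hsq : 0 < (a i0 - b i0) ^ 2 :=
        lt_of_le_of_ne (sq_nonneg _) (Ne.symm (pow_ne_zero 2 hne))
      norm_num
      positivity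
  have hH1 : auxH a b 1 < 0 := by
    unfold auxH
    have h : (∑ i, (a i - b i) ^ 2 * (b i * (1 - (1:ℝ)) ^ 2 - a i * 1 ^ 2)
        / ((1:ℝ) * a i + (1 - 1) * b i) ^ 2) < ∑ _i : Fin r, (0:ℝ) := by
      apply Finset.sum_lt_sum
      · intro i _
        have hai := ha i
        have key : (a i - b i) ^ 2 * (b i * (1 - (1:ℝ)) ^ 2 - a i * 1 ^ 2)
            / ((1:ℝ) * a i + (1 - 1) * b i) ^ 2 = -((a i - b i) ^ 2 * a i / a i ^ 2) := by
          field_simp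
          rw [div_eq_iff (by norm_num [hai.ne'])]
          ring
        rw [key]
        have : 0 ≤ (a i - b i) ^ 2 * a i / a i ^ 2 := by positivity
        linarith
      · refine ⟨i0, Finset.mem_univ _, ?_⟩
        have hai := ha i0
        have hne : a i0 - b i0 ≠ 0 := sub_ne_zero.2 hi0
        have hsq : 0 < (a i0 - b i0) ^ 2 :=
          lt_of_le_of_ne (sq_nonneg _) (Ne.symm (pow_ne_zero 2 hne))
        have key : (a i0 - b i0) ^ 2 * (b i0 * (1 - (1:ℝ)) ^ 2 - a i0 * 1 ^ 2)
            / ((1:ℝ) * a i0 + (1 - 1) * b i0) ^ 2 = -((a i0 - b i0) ^ 2 * a i0 / a i0 ^ 2) := by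
          field_simp
          rw [div_eq_iff (by norm_num [hai.ne'])]
          ring
        rw [key]
        have : 0 < (a i0 - b i0) ^ 2 * a i0 / a i0 ^ 2 := by positivity
        linarith
    simpa using h
  obtain ⟨p, hpmem, hHp⟩ := intermediate_value_Ioo' (by norm_num : (0:ℝ) ≤ 1) hHc
    (Set.mem_Ioo.mpr ⟨hH1, hH0⟩)
  have hpIcc : p ∈ Set.Icc (0:ℝ) 1 := ⟨hpmem.1.le, hpmem.2.le⟩
  have crit_iff : ∀ q ∈ Set.Ioo (0:ℝ) 1,
      ((∑ i, a i * (a i - b i) ^ 2 / (a i + ((1 - q) / q) * b i) ^ 2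
        = ∑ i, b i * (a i - b i) ^ 2 / ((q / (1 - q)) * a i + b i) ^ 2)
       ↔ auxH a b q = 0) := by
    intro q hq
    have hq0 : q ≠ 0 := ne_of_gt hq.1
    have hq1 : (1 : ℝ) - q ≠ 0 := sub_ne_zero.2 hq.2.ne'
    have hd : ∀ i, q * a i + (1 - q) * b i ≠ 0 :=
      fun i => (aux_dpos (ha i) (hb i) hq.1.le hq.2.le).ne'
    have e1 : ∀ i, a i * (a i - b i) ^ 2 / (a i + ((1 - q) / q) * b i) ^ 2
        = q ^ 2 * (a i * (a i - b i) ^ 2) / (q * a i + (1 - q) * b i) ^ 2 := by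
      intro i
      rw [show a i + ((1 - q) / q) * b i = (q * a i + (1 - q) * b i) / q by
        field_simp]
      rw [div_pow, div_div_eq_mul_div]
      ring
    have e2 : ∀ i, b i * (a i - b i) ^ 2 / ((q / (1 - q)) * a i + b i) ^ 2
        = (1 - q) ^ 2 * (b i * (a i - b i) ^ 2) / (q * a i + (1 - q) * b i) ^ 2 := by
      intro i
      rw [show (q / (1 - q)) * a i + b i = (q * a i + (1 - q) * b i) / (1 - q) by
        field_simp]
      rw [div_pow, div_div_eq_mul_div]
      ring
    have hs1 : (∑ i, a i * (a i - b i) ^ 2 / (a i + ((1 - q) / q) * b i) ^ 2)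
        = ∑ i, q ^ 2 * (a i * (a i - b i) ^ 2) / (q * a i + (1 - q) * b i) ^ 2 :=
      Finset.sum_congr rfl fun i _ => e1 i
    have hs2 : (∑ i, b i * (a i - b i) ^ 2 / ((q / (1 - q)) * a i + b i) ^ 2)
        = ∑ i, (1 - q) ^ 2 * (b i * (a i - b i) ^ 2) / (q * a i + (1 - q) * b i) ^ 2 :=
      Finset.sum_congr rfl fun i _ => e2 i
    have hsplit : auxH a b q
        = (∑ i, (1 - q) ^ 2 * (b i * (a i - b i) ^ 2) / (q * a i + (1 - q) * b i) ^ 2)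
          - ∑ i, q ^ 2 * (a i * (a i - b i) ^ 2) / (q * a i + (1 - q) * b i) ^ 2 := by
      unfold auxH
      rw [← Finset.sum_sub_distrib]
      exact Finset.sum_congr rfl fun i _ => by ring
    rw [hs1, hs2, hsplit]
    constructor
    · intro h; rw [h]; ring
    · intro h; linarith
  have huniq : ∀ q ∈ Set.Ioo (0:ℝ) 1, auxH a b q = 0 → q = p := by
    intro q hq h0
    rcases lt_trichotomy q p with h | h | h
    · exfalso
      have := hanti ⟨hq.1.le, hq.2.le⟩ hpIcc h
      rw [hHp, h0] at this
      exact lt_irrefl 0 this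
    · exact h
    · exfalso
      have := hanti hpIcc ⟨hq.1.le, hq.2.le⟩ h
      rw [hHp, h0] at this
      exact lt_irrefl 0 this
  have hmono : StrictMonoOn (auxG a b) (Set.Icc 0 p) := by
    apply strictMonoOn_of_deriv_pos (convex_Icc 0 p)
      (hGc.mono (Set.Icc_subset_Icc le_rfl hpmem.2.le))
    intro x hx
    rw [interior_Icc] at hx
    have hx1 : x ∈ Set.Ioo (0:ℝ) 1 := ⟨hx.1, hx.2.trans hpmem.2⟩
    have hdx : ∀ i, x * a i + (1 - x) * b i ≠ 0 :=
      fun i => (aux_dpos (ha i) (hb i) hx1.1.le hx1.2.le).ne'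
    rw [(auxG_hasDerivAt a b hdx).deriv]
    have := hanti ⟨hx1.1.le, hx1.2.le⟩ hpIcc hx.2
    rwa [hHp] at this
  have hantiG : StrictAntiOn (auxG a b) (Set.Icc p 1) := by
    apply strictAntiOn_of_deriv_neg (convex_Icc p 1)
      (hGc.mono (Set.Icc_subset_Icc hpmem.1.le le_rfl))
    intro x hx
    rw [interior_Icc] at hx
    have hx1 : x ∈ Set.Ioo (0:ℝ) 1 := ⟨hpmem.1.trans hx.1, hx.2⟩
    have hdx : ∀ i, x * a i + (1 - x) * b i ≠ 0 :=
      fun i => (aux_dpos (ha i) (hb i) hx1.1.le hx1.2.le).ne'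
    rw [(auxG_hasDerivAt a b hdx).deriv]
    have := hanti hpIcc ⟨hx1.1.le, hx1.2.le⟩ hx.1
    rwa [hHp] at this
  refine ⟨p, hpmem, (crit_iff p hpmem).mpr hHp,
    fun q hq he => huniq q hq ((crit_iff q hq).mp he), ?_⟩
  intro q hq hne
  rcases lt_or_gt_of_ne hne with h | h
  · exact hmono ⟨hq.1, h.le⟩ ⟨hpmem.1.le, le_rfl⟩ h
  · exact hantiG ⟨le_rfl, hpmem.2.le⟩ ⟨h.le, hq.2⟩ h
end
end

section
/- Let d ≥ 2 and let M be a commuting-operator measurement on ℂ^d with r outcomes and all diagonal entries m_j⁽ⁱ⁾ > 0. Then γ(M) ≤ 1 − min over pairs k ≠ l of (Σᵢ √(m_k⁽ⁱ⁾·m_l⁽ⁱ⁾))². Moreover, if some pair (k,l) attaining the minimum of Σᵢ √(m_k⁽ⁱ⁾·m_l⁽ⁱ⁾) is such that the set {m_k⁽ⁱ⁾/m_l⁽ⁱ⁾ : 1 ≤ i ≤ r} contains at most two distinct elements, then equality holds. -/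
open scoped Matrix Kronecker ComplexOrder
open Classical

noncomputable section

/-! ### Auxiliary lemmas for `stmt11` -/

/-- Sum of a function supported on two points. -/
lemma sum_two' {α : Type*} [AddCommMonoid α] {d : ℕ} (k l : Fin d) (hkl : k ≠ l)
    (f : Fin d → α) (h : ∀ j, j ≠ k → j ≠ l → f j = 0) :
    ∑ j, f j = f k + f l := by
  have h1 : ∑ j, f j = ∑ j ∈ ({k, l} : Finset (Fin d)), f j := by
    refine (Finset.sum_subset (Finset.subset_univ _) ?_).symm
    intro x _ hx
    simp only [Finset.mem_insert, Finset.mem_singleton, not_or] at hx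
    exact h x hx.1 hx.2
  rw [h1, Finset.sum_pair hkl]

/-- Cauchy–Schwarz with square roots. -/
lemma cs_sqrt {r : ℕ} (f g : Fin r → ℝ) (hf : ∀ i, 0 ≤ f i) (hg : ∀ i, 0 ≤ g i) :
    (∑ i, Real.sqrt (f i * g i)) ^ 2 ≤ (∑ i, f i) * (∑ i, g i) :=
  Finset.sum_sq_le_sum_mul_sum_of_sq_eq_mul _ (fun i _ => hf i) (fun i _ => hg i)
    (fun i _ => Real.sq_sqrt (mul_nonneg (hf i) (hg i)))

lemma double_sum_eval {d : ℕ} (a b c e f g : Fin d → ℝ) :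
    ∑ j, ∑ k, (a j * b k + c j * e k - 2 * (f j * g k))
      = (∑ j, a j) * (∑ k, b k) + (∑ j, c j) * (∑ k, e k)
        - 2 * ((∑ j, f j) * (∑ k, g k)) := by
  have h1 : ∀ j, ∑ k, (a j * b k + c j * e k - 2 * (f j * g k))
      = a j * (∑ k, b k) + c j * (∑ k, e k) - 2 * (f j * (∑ k, g k)) := by
    intro j
    rw [Finset.sum_sub_distrib, Finset.sum_add_distrib, ← Finset.mul_sum, ← Finset.mul_sum,
      ← Finset.mul_sum, ← Finset.mul_sum]
  simp only [h1]
  rw [Finset.sum_sub_distrib, Finset.sum_add_distrib, ← Finset.sum_mul, ← Finset.sum_mul,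
    ← Finset.mul_sum, ← Finset.sum_mul]

/-- Core upper bound: the real-variable inequality behind statement 11. -/
lemma coreA {d r : ℕ} (m : Fin r → Fin d → ℝ) (hpos : ∀ i j, 0 < m i j)
    (hsum : ∀ j, ∑ i, m i j = 1)
    (F : ℝ) (hF0 : 0 ≤ F) (hF1 : F ≤ 1)
    (hF : ∀ j k : Fin d, j ≠ k → F ≤ ∑ i, Real.sqrt (m i j * m i k))
    (q q' t : Fin d → ℝ) (hq : ∀ j, 0 ≤ q j) (hq' : ∀ j, 0 ≤ q' j)
    (ht : ∀ j, t j ^ 2 ≤ q j * q' j)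
    (hqs : ∑ j, q j = 1) (hq's : ∑ j, q' j = 1) (hts : ∑ j, t j = 0) :
    ∑ i, (∑ j, m i j * t j) ^ 2 / (∑ j, m i j * q j) ≤ 1 - F ^ 2 := by
  set p : Fin r → ℝ := fun i => ∑ j, m i j * q j with hp_def
  set n : Fin r → ℝ := fun i => ∑ j, m i j * t j with hn_def
  set A : Fin r → ℝ := fun i => ∑ j, m i j * (t j ^ 2 / q j) with hA_def
  set T : ℝ := ∑ j, t j ^ 2 / q j with hT_def
  set c : Fin d → Fin d → ℝ := fun j k => (q j * t k - q k * t j) ^ 2 / (q j * q k) with hc_def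
  have htz : ∀ j, q j = 0 → t j = 0 := by
    intro j hj
    have h1 : t j ^ 2 ≤ 0 := by
      have := ht j; rw [hj, zero_mul] at this; exact this
    have h2 : t j ^ 2 = 0 := le_antisymm h1 (sq_nonneg _)
    exact pow_eq_zero_iff (by norm_num) |>.1 h2
  obtain ⟨j0, hj0⟩ : ∃ j, q j ≠ 0 := by
    by_contra h
    push_neg at h
    simp only [h, Finset.sum_const_zero] at hqs
    norm_num at hqs
  have hqj0 : 0 < q j0 := (hq j0).lt_of_ne' hj0
  have hp : ∀ i, 0 < p i := by
    intro i
    have h1 : m i j0 * q j0 ≤ p i :=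
      Finset.single_le_sum (fun j _ => mul_nonneg (hpos i j).le (hq j)) (Finset.mem_univ j0)
    exact lt_of_lt_of_le (mul_pos (hpos i j0) hqj0) h1
  have key : ∀ (i : Fin r) (j k' : Fin d), m i j * m i k' * c j k'
      = (m i j * q j) * (m i k' * (t k' ^ 2 / q k')) + (m i j * (t j ^ 2 / q j)) * (m i k' * q k')
        - 2 * ((m i j * t j) * (m i k' * t k')) := by
    intro i j k'
    rcases eq_or_ne (q j) 0 with hj | hj
    · simp [hc_def, hj, htz j hj]
    rcases eq_or_ne (q k') 0 with hk | hk
    · simp [hc_def, hk, htz k' hk]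
    simp only [hc_def]
    field_simp
    ring
  have key2 : ∀ (j k' : Fin d), c j k'
      = q j * (t k' ^ 2 / q k') + (t j ^ 2 / q j) * q k' - 2 * (t j * t k') := by
    intro j k'
    rcases eq_or_ne (q j) 0 with hj | hj
    · simp [hc_def, hj, htz j hj]
    rcases eq_or_ne (q k') 0 with hk | hk
    · simp [hc_def, hk, htz k' hk]
    simp only [hc_def]
    field_simp
    ring
  have hD : ∀ i, ∑ j, ∑ k', m i j * m i k' * c j k' = 2 * (p i * A i - n i ^ 2) := by
    intro i
    calc ∑ j, ∑ k', m i j * m i k' * c j k'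
        = ∑ j, ∑ k', ((m i j * q j) * (m i k' * (t k' ^ 2 / q k'))
            + (m i j * (t j ^ 2 / q j)) * (m i k' * q k')
            - 2 * ((m i j * t j) * (m i k' * t k'))) := by
          refine Finset.sum_congr rfl fun j _ => Finset.sum_congr rfl fun k' _ => key i j k'
      _ = p i * A i + A i * p i - 2 * (n i * n i) :=
          double_sum_eval _ _ _ _ _ _
      _ = 2 * (p i * A i - n i ^ 2) := by ring
  have hc2 : ∑ j, ∑ k', c j k' = 2 * T := by
    calc ∑ j, ∑ k', c j k'
        = ∑ j, ∑ k', (q j * (t k' ^ 2 / q k') + (t j ^ 2 / q j) * q k' - 2 * (t j * t k')) := by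
          refine Finset.sum_congr rfl fun j _ => Finset.sum_congr rfl fun k' _ => key2 j k'
      _ = (∑ j, q j) * T + T * (∑ j, q j) - 2 * ((∑ j, t j) * (∑ j, t j)) :=
          double_sum_eval _ _ _ _ _ _
      _ = 2 * T := by rw [hqs, hts]; ring
  have hAT : ∑ i, A i = T := by
    rw [hA_def, hT_def, Finset.sum_comm]
    refine Finset.sum_congr rfl fun j _ => ?_
    rw [← Finset.sum_mul, hsum, one_mul]
  have hps : ∑ i, p i = 1 := by
    rw [hp_def, Finset.sum_comm]
    calc ∑ j, ∑ i, m i j * q j = ∑ j, q j := by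
          refine Finset.sum_congr rfl fun j _ => ?_
          rw [← Finset.sum_mul, hsum, one_mul]
      _ = 1 := hqs
  set R : Fin d → Fin d → ℝ := fun j k => ∑ i, m i j * m i k / p i with hR_def
  have hRF : ∀ j k', j ≠ k' → F ^ 2 ≤ R j k' := by
    intro j k' hjk
    have h1 : (∑ i, Real.sqrt (m i j * m i k' / p i * p i)) ^ 2
        ≤ (∑ i, m i j * m i k' / p i) * (∑ i, p i) :=
      cs_sqrt _ _ (fun i => div_nonneg (mul_nonneg (hpos i j).le (hpos i k').le) (hp i).le)
        (fun i => (hp i).le)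
    have h2 : ∀ i : Fin r, m i j * m i k' / p i * p i = m i j * m i k' := fun i =>
      div_mul_cancel₀ _ (hp i).ne'
    simp only [h2, hps, mul_one] at h1
    calc F ^ 2 ≤ (∑ i, Real.sqrt (m i j * m i k')) ^ 2 :=
          pow_le_pow_left₀ hF0 (hF j k' hjk) 2
      _ ≤ R j k' := h1
  have hrepr : ∑ i, n i ^ 2 / p i = T - (1/2) * ∑ j, ∑ k', c j k' * R j k' := by
    have h1 : ∀ i, n i ^ 2 / p i = A i - (1/2) * ∑ j, ∑ k', m i j * m i k' * c j k' / p i := by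
      intro i
      have h2 : ∑ j, ∑ k', m i j * m i k' * c j k' / p i
          = (∑ j, ∑ k', m i j * m i k' * c j k') / p i := by
        rw [Finset.sum_div]
        exact Finset.sum_congr rfl fun j _ => (Finset.sum_div _ _ _).symm
      have hpi : p i ≠ 0 := (hp i).ne'
      rw [h2, hD i]
      field_simp
      ring
    simp only [h1]
    rw [Finset.sum_sub_distrib, hAT, ← Finset.mul_sum]
    congr 1
    congr 1
    rw [Finset.sum_comm]
    refine Finset.sum_congr rfl fun j _ => ?_
    rw [Finset.sum_comm]
    refine Finset.sum_congr rfl fun k' _ => ?_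
    rw [hR_def, Finset.mul_sum]
    refine Finset.sum_congr rfl fun i _ => ?_
    ring
  have hcnn : ∀ j k', 0 ≤ c j k' := fun j k' =>
    div_nonneg (sq_nonneg _) (mul_nonneg (hq j) (hq k'))
  have hcdiag : ∀ j, c j j = 0 := by
    intro j; simp [hc_def]
  have hlb : F ^ 2 * (2 * T) ≤ ∑ j, ∑ k', c j k' * R j k' := by
    rw [← hc2, Finset.mul_sum]
    refine Finset.sum_le_sum fun j _ => ?_
    rw [Finset.mul_sum]
    refine Finset.sum_le_sum fun k' _ => ?_
    rcases eq_or_ne j k' with h | h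
    · rw [← h, hcdiag j]; simp
    · rw [mul_comm (F^2) (c j k')]
      exact mul_le_mul_of_nonneg_left (hRF j k' h) (hcnn j k')
  have hT1 : T ≤ 1 := by
    rw [hT_def, ← hq's]
    refine Finset.sum_le_sum fun j _ => ?_
    rcases eq_or_ne (q j) 0 with hj | hj
    · simp [hj, htz j hj, hq' j]
    · rw [div_le_iff₀ ((hq j).lt_of_ne' hj)]
      calc t j ^ 2 ≤ q j * q' j := ht j
        _ = q' j * q j := mul_comm _ _
  have hT0 : 0 ≤ T := Finset.sum_nonneg fun j _ => div_nonneg (sq_nonneg _) (hq j)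
  calc ∑ i, n i ^ 2 / p i = T - (1/2) * ∑ j, ∑ k', c j k' * R j k' := hrepr
    _ ≤ T - (1/2) * (F ^ 2 * (2 * T)) := by linarith
    _ = T * (1 - F ^ 2) := by ring
    _ ≤ 1 * (1 - F ^ 2) := by
        have hF2 : F ^ 2 ≤ 1 := by nlinarith
        nlinarith
    _ = 1 - F ^ 2 := one_mul _

/-- Core equality construction for the two-ratio case. -/
lemma coreB {r : ℕ} (a b : Fin r → ℝ) (ha : ∀ i, 0 < a i) (hb : ∀ i, 0 < b i)
    (hsa : ∑ i, a i = 1) (hsb : ∑ i, b i = 1)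
    (ρ ρ' : ℝ) (hρ : 0 < ρ) (hρ' : 0 < ρ')
    (hall : ∀ i, a i = ρ * b i ∨ a i = ρ' * b i)
    (qs : ℝ) (hqs : qs = 1 / (1 + Real.sqrt ρ * Real.sqrt ρ')) :
    ∑ i, (a i * (Real.sqrt qs * Real.sqrt (1 - qs))
        + b i * (-(Real.sqrt (1 - qs) * Real.sqrt qs))) ^ 2 / (a i * qs + b i * (1 - qs))
      = 1 - (∑ i, Real.sqrt (a i * b i)) ^ 2 := by
  set sρ := Real.sqrt ρ with hsρ
  set sρ' := Real.sqrt ρ' with hsρ'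
  have hsρ0 : 0 < sρ := Real.sqrt_pos.2 hρ
  have hsρ'0 : 0 < sρ' := Real.sqrt_pos.2 hρ'
  have hρeq : ρ = sρ ^ 2 := (Real.sq_sqrt hρ.le).symm
  have hρ'eq : ρ' = sρ' ^ 2 := (Real.sq_sqrt hρ'.le).symm
  have hw0 : 0 < 1 + sρ * sρ' := by nlinarith [mul_pos hsρ0 hsρ'0]
  have hw0' : (1 : ℝ) + sρ * sρ' ≠ 0 := hw0.ne'
  have hss : sρ + sρ' ≠ 0 := (add_pos hsρ0 hsρ'0).ne'
  have hqs0 : 0 < qs := by rw [hqs]; exact one_div_pos.mpr hw0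
  have hqs1 : qs < 1 := by
    rw [hqs, div_lt_one hw0]
    nlinarith [mul_pos hsρ0 hsρ'0]
  have h1qs : 0 < 1 - qs := by linarith
  have hp : ∀ i, 0 < a i * qs + b i * (1 - qs) := fun i => by
    have := ha i; have := hb i; nlinarith
  have huv : Real.sqrt qs * Real.sqrt qs = qs := Real.mul_self_sqrt hqs0.le
  have hvv : Real.sqrt (1 - qs) * Real.sqrt (1 - qs) = 1 - qs := Real.mul_self_sqrt h1qs.le
  have hsq : ∀ i, Real.sqrt (a i * b i) = (if a i = ρ * b i then sρ else sρ') * b i := by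
    intro i
    rcases eq_or_ne (a i) (ρ * b i) with h | h
    · rw [if_pos h, h, hρeq]
      rw [show sρ ^ 2 * b i * b i = (sρ * b i) ^ 2 by ring]
      exact Real.sqrt_sq (mul_nonneg hsρ0.le (hb i).le)
    · rw [if_neg h]
      rcases hall i with h' | h'
      · exact absurd h' h
      · rw [h', hρ'eq]
        rw [show sρ' ^ 2 * b i * b i = (sρ' * b i) ^ 2 by ring]
        exact Real.sqrt_sq (mul_nonneg hsρ'0.le (hb i).le)
  set F := ∑ i, Real.sqrt (a i * b i) with hF
  set C := (1 + sρ * sρ') / (sρ + sρ') with hC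
  have habp : ∀ i, a i * b i / (a i * qs + b i * (1 - qs)) = C * Real.sqrt (a i * b i) := by
    intro i
    rw [hsq i]
    have hbi := hb i
    have hpi : a i * qs + b i * (1 - qs) ≠ 0 := (hp i).ne'
    rw [div_eq_iff hpi]
    rcases eq_or_ne (a i) (ρ * b i) with h | h
    · rw [if_pos h, h, hρeq, hC, hqs]
      field_simp
      ring
    · rw [if_neg h]
      rcases hall i with h' | h'
      · exact absurd h' h
      · rw [h', hρ'eq, hC, hqs]
        field_simp
        ring
  have hCF : C = F := by
    have h1 : F * (sρ + sρ') = 1 + sρ * sρ' := by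
      rw [hF, Finset.sum_mul]
      have h2 : ∀ i, Real.sqrt (a i * b i) * (sρ + sρ') = a i + (sρ * sρ') * b i := by
        intro i
        rw [hsq i]
        rcases eq_or_ne (a i) (ρ * b i) with h | h
        · rw [if_pos h, h, hρeq]; ring
        · rw [if_neg h]
          rcases hall i with h' | h'
          · exact absurd h' h
          · rw [h', hρ'eq]; ring
      simp only [h2]
      rw [Finset.sum_add_distrib, hsa, ← Finset.mul_sum, hsb, mul_one]
    rw [hC, div_eq_iff hss, ← h1]
  have hmain : ∀ i, (a i * (Real.sqrt qs * Real.sqrt (1 - qs))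
      + b i * (-(Real.sqrt (1 - qs) * Real.sqrt qs))) ^ 2 / (a i * qs + b i * (1 - qs))
      = (b i * qs + a i * (1 - qs)) - a i * b i / (a i * qs + b i * (1 - qs)) := by
    intro i
    have hpi : a i * qs + b i * (1 - qs) ≠ 0 := (hp i).ne'
    have hnum : (a i * (Real.sqrt qs * Real.sqrt (1 - qs))
        + b i * (-(Real.sqrt (1 - qs) * Real.sqrt qs))) ^ 2
        = qs * (1 - qs) * (a i - b i) ^ 2 := by
      rw [show (a i * (Real.sqrt qs * Real.sqrt (1 - qs))
        + b i * (-(Real.sqrt (1 - qs) * Real.sqrt qs))) ^ 2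
        = (Real.sqrt qs * Real.sqrt qs) * (Real.sqrt (1 - qs) * Real.sqrt (1 - qs))
          * (a i - b i) ^ 2 by ring, huv, hvv]
    rw [hnum]
    rw [eq_sub_iff_add_eq, ← add_div, div_eq_iff hpi]
    ring
  simp only [hmain, habp]
  rw [Finset.sum_sub_distrib, Finset.sum_add_distrib, ← Finset.sum_mul, ← Finset.sum_mul,
    hsa, hsb, ← Finset.mul_sum, ← hF, hCF]
  ring

/-- normalization of a vector, in real terms. -/
lemma cInner_self_re {d : ℕ} (φ : Fin d → ℂ) (h : cInner φ φ = 1) :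
    ∑ j, Complex.normSq (φ j) = 1 := by
  have h1 : ((∑ j, Complex.normSq (φ j) : ℝ) : ℂ) = 1 := by
    push_cast
    rw [← h, cInner]
    refine Finset.sum_congr rfl fun j _ => ?_
    rw [Complex.normSq_eq_conj_mul_self, Complex.star_def]
  exact_mod_cast h1

/-- `gammaSummand` of a commuting measurement, in real terms. -/
lemma gamma_repr {d r : ℕ} (m : Fin r → Fin d → ℝ) (hpos : ∀ i j, 0 < m i j)
    (M : Fin r → Matrix (Fin d) (Fin d) ℂ)
    (hMdef : ∀ i, M i = Matrix.diagonal fun j => ((m i j : ℝ) : ℂ))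
    (φ φp : Fin d → ℂ) (hφ : cInner φ φ = 1) :
    gammaSummand M φ φp = ∑ i, (∑ j, m i j * (star (φ j) * φp j).re) ^ 2 /
      (∑ j, m i j * Complex.normSq (φ j)) := by
  have hqsum : ∑ j, Complex.normSq (φ j) = 1 := cInner_self_re φ hφ
  have hMv : ∀ (i : Fin r) (ψ : Fin d → ℂ) (j : Fin d), (M i *ᵥ ψ) j = (m i j : ℂ) * ψ j := by
    intro i ψ j
    rw [hMdef i, Matrix.mulVec_diagonal]
  have hden : ∀ i, cInner φ (M i *ᵥ φ) = ((∑ j, m i j * Complex.normSq (φ j) : ℝ) : ℂ) := by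
    intro i
    rw [cInner]
    push_cast
    refine Finset.sum_congr rfl fun j _ => ?_
    rw [hMv i φ j, Complex.normSq_eq_conj_mul_self, Complex.star_def]
    ring
  have hnum : ∀ i, (cInner φ (M i *ᵥ φp)).re = ∑ j, m i j * (star (φ j) * φp j).re := by
    intro i
    rw [cInner, Complex.re_sum]
    refine Finset.sum_congr rfl fun j _ => ?_
    rw [hMv i φp j,
      show star (φ j) * ((m i j : ℝ) * φp j) = (m i j : ℝ) * (star (φ j) * φp j) by ring,
      Complex.re_ofReal_mul]
  have hppos : ∀ i, 0 < ∑ j, m i j * Complex.normSq (φ j) := by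
    intro i
    obtain ⟨j0, hj0⟩ : ∃ j, Complex.normSq (φ j) ≠ 0 := by
      by_contra h
      push_neg at h
      simp only [h, Finset.sum_const_zero] at hqsum
      norm_num at hqsum
    have hq0 : 0 < Complex.normSq (φ j0) := (Complex.normSq_nonneg _).lt_of_ne' hj0
    have h1 : m i j0 * Complex.normSq (φ j0) ≤ ∑ j, m i j * Complex.normSq (φ j) :=
      Finset.single_le_sum (fun j _ => mul_nonneg (hpos i j).le (Complex.normSq_nonneg _))
        (Finset.mem_univ j0)
    exact lt_of_lt_of_le (mul_pos (hpos i j0) hq0) h1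
  rw [gammaSummand]
  refine Finset.sum_congr rfl fun i _ => ?_
  rw [if_neg (by rw [hden i]; exact_mod_cast (hppos i).ne'), hden i, hnum i, Complex.ofReal_re]

lemma two_values {r : ℕ} (hr : 1 ≤ r) (f : Fin r → ℝ)
    (hcard : (Finset.image f Finset.univ).card ≤ 2) :
    ∃ ρ ρ' : ℝ, (∃ i, f i = ρ) ∧ (∃ i, f i = ρ') ∧ ∀ i, f i = ρ ∨ f i = ρ' := by
  have i0 : Fin r := ⟨0, hr⟩
  by_cases hone : ∀ i, f i = f i0
  · exact ⟨f i0, f i0, ⟨i0, rfl⟩, ⟨i0, rfl⟩, fun i => Or.inl (hone i)⟩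
  · push_neg at hone
    obtain ⟨i1, hi1⟩ := hone
    refine ⟨f i0, f i1, ⟨i0, rfl⟩, ⟨i1, rfl⟩, ?_⟩
    intro i
    by_contra h
    push_neg at h
    obtain ⟨h1, h2⟩ := h
    have hsub : ({f i, f i0, f i1} : Finset ℝ) ⊆ Finset.image f Finset.univ := by
      intro y hy
      simp only [Finset.mem_insert, Finset.mem_singleton] at hy
      rcases hy with rfl | rfl | rfl <;> exact Finset.mem_image_of_mem f (Finset.mem_univ _)
    have h3 : ({f i, f i0, f i1} : Finset ℝ).card = 3 := by
      rw [Finset.card_insert_of_notMem (by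
        simp only [Finset.mem_insert, Finset.mem_singleton]
        push_neg
        exact ⟨h1, h2⟩),
        Finset.card_insert_of_notMem (by
          simp only [Finset.mem_singleton]
          exact fun h => hi1 h.symm), Finset.card_singleton]
    have := Finset.card_le_card hsub
    omega

/-- upper bound on the normalized QPFI of a commuting-operator measurement in
terms of the minimal fidelity between pairs of diagonal outcome distributions, with a
sufficient condition for equality. -/
theorem stmt11 {d r : ℕ} (hd : 2 ≤ d) (hr : 1 ≤ r)
    (m : Fin r → Fin d → ℝ) (hpos : ∀ i j, 0 < m i j) (hsum : ∀ j, ∑ i, m i j = 1)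
    (M : Fin r → Matrix (Fin d) (Fin d) ℂ)
    (hMdef : ∀ i, M i = Matrix.diagonal fun j => ((m i j : ℝ) : ℂ))
    (S : Set ℝ)
    (hS : S = {s : ℝ | ∃ k l : Fin d, k ≠ l ∧ s = ∑ i, Real.sqrt (m i k * m i l)}) :
    gammaPOVM M ≤ 1 - (sInf S) ^ 2
    ∧ ((∃ k l : Fin d, k ≠ l ∧ (∑ i, Real.sqrt (m i k * m i l)) = sInf S ∧
          (Finset.image (fun i => m i k / m i l) Finset.univ).card ≤ 2) →
        gammaPOVM M = 1 - (sInf S) ^ 2) := by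
  obtain ⟨k0, k1, hk01⟩ : ∃ k0 k1 : Fin d, k0 ≠ k1 :=
    ⟨⟨0, by omega⟩, ⟨1, by omega⟩, by simp [Fin.ext_iff]⟩
  subst hS
  set F := sInf {s : ℝ | ∃ k l : Fin d, k ≠ l ∧ s = ∑ i, Real.sqrt (m i k * m i l)} with hFdef
  have hSne : {s : ℝ | ∃ k l : Fin d, k ≠ l ∧ s = ∑ i, Real.sqrt (m i k * m i l)}.Nonempty :=
    ⟨_, k0, k1, hk01, rfl⟩
  have hSlb : ∀ s ∈ {s : ℝ | ∃ k l : Fin d, k ≠ l ∧ s = ∑ i, Real.sqrt (m i k * m i l)},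
      (0:ℝ) ≤ s := by
    rintro s ⟨k, l, -, rfl⟩
    exact Finset.sum_nonneg fun i _ => Real.sqrt_nonneg _
  have hBdd : BddBelow {s : ℝ | ∃ k l : Fin d, k ≠ l ∧ s = ∑ i, Real.sqrt (m i k * m i l)} :=
    ⟨0, fun s hs => hSlb s hs⟩
  have hF0 : 0 ≤ F := le_csInf hSne hSlb
  have hFle : ∀ j k : Fin d, j ≠ k → F ≤ ∑ i, Real.sqrt (m i j * m i k) :=
    fun j k h => csInf_le hBdd ⟨j, k, h, rfl⟩
  have hpair1 : ∀ j k : Fin d, (∑ i, Real.sqrt (m i j * m i k)) ≤ 1 := by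
    intro j k
    have h1 := cs_sqrt (fun i => m i j) (fun i => m i k)
      (fun i => (hpos i j).le) (fun i => (hpos i k).le)
    rw [hsum j, hsum k, mul_one] at h1
    have h0 : 0 ≤ ∑ i, Real.sqrt (m i j * m i k) :=
      Finset.sum_nonneg fun i _ => Real.sqrt_nonneg _
    nlinarith
  have hF1 : F ≤ 1 := (hFle k0 k1 hk01).trans (hpair1 k0 k1)
  have hub : ∀ x ∈ {x : ℝ | ∃ φ φp : Fin d → ℂ,
      cInner φ φ = 1 ∧ cInner φp φp = 1 ∧ cInner φ φp = 0 ∧ x = gammaSummand M φ φp},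
      x ≤ 1 - F ^ 2 := by
    rintro x ⟨φ, φp, h1, h2, h3, rfl⟩
    rw [gamma_repr m hpos M hMdef φ φp h1]
    have hqs' := cInner_self_re φ h1
    have hq's := cInner_self_re φp h2
    have hts : ∑ j, (star (φ j) * φp j).re = 0 := by
      have h4 := congrArg Complex.re h3
      rw [cInner, Complex.re_sum] at h4
      simpa using h4
    have ht : ∀ j, (star (φ j) * φp j).re ^ 2
        ≤ Complex.normSq (φ j) * Complex.normSq (φp j) := by
      intro j
      calc (star (φ j) * φp j).re ^ 2 ≤ Complex.normSq (star (φ j) * φp j) := by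
            rw [Complex.normSq_apply, sq]
            nlinarith [mul_self_nonneg (star (φ j) * φp j).im]
        _ = Complex.normSq (φ j) * Complex.normSq (φp j) := by
            rw [Complex.normSq_mul, Complex.star_def, Complex.normSq_conj]
    exact coreA m hpos hsum F hF0 hF1 hFle _ _ _ (fun j => Complex.normSq_nonneg _)
      (fun j => Complex.normSq_nonneg _) ht hqs' hq's hts
  have hnn : (0:ℝ) ≤ 1 - F ^ 2 := by nlinarith
  have part1 : gammaPOVM M ≤ 1 - F ^ 2 := by
    unfold gammaPOVM
    exact Real.sSup_le hub hnn
  refine ⟨part1, ?_⟩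
  rintro ⟨k, l, hkl, hFeq, hcard⟩
  obtain ⟨ρ, ρ', ⟨iρ, hiρ⟩, ⟨iρ', hiρ'⟩, hall0⟩ := two_values hr (fun i => m i k / m i l) hcard
  have hρ : 0 < ρ := hiρ ▸ div_pos (hpos iρ k) (hpos iρ l)
  have hρ' : 0 < ρ' := hiρ' ▸ div_pos (hpos iρ' k) (hpos iρ' l)
  have hall : ∀ i, m i k = ρ * m i l ∨ m i k = ρ' * m i l := by
    intro i
    rcases hall0 i with h | h
    · exact Or.inl ((div_eq_iff (hpos i l).ne').1 h)
    · exact Or.inr ((div_eq_iff (hpos i l).ne').1 h)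
  set qs : ℝ := 1 / (1 + Real.sqrt ρ * Real.sqrt ρ') with hqsdef
  have hw0 : 0 < 1 + Real.sqrt ρ * Real.sqrt ρ' := by
    nlinarith [mul_pos (Real.sqrt_pos.2 hρ) (Real.sqrt_pos.2 hρ')]
  have hqs0 : 0 < qs := one_div_pos.mpr hw0
  have hqs1 : qs < 1 := by
    rw [hqsdef, div_lt_one hw0]
    nlinarith [mul_pos (Real.sqrt_pos.2 hρ) (Real.sqrt_pos.2 hρ')]
  have h1qs : 0 < 1 - qs := by linarith
  set u := Real.sqrt qs with hu
  set v := Real.sqrt (1 - qs) with hv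
  have huu : u * u = qs := Real.mul_self_sqrt hqs0.le
  have hvv : v * v = 1 - qs := Real.mul_self_sqrt h1qs.le
  set φ : Fin d → ℂ := fun j => if j = k then (u:ℂ) else if j = l then (v:ℂ) else 0 with hφdef
  set φp : Fin d → ℂ := fun j => if j = k then (v:ℂ) else if j = l then (-(u:ℂ)) else 0
    with hφpdef
  have hφk : φ k = (u:ℂ) := by simp [hφdef]
  have hφl : φ l = (v:ℂ) := by simp [hφdef, hkl.symm]
  have hφo : ∀ j, j ≠ k → j ≠ l → φ j = 0 := by intro j h1 h2; simp [hφdef, h1, h2]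
  have hφpk : φp k = (v:ℂ) := by simp [hφpdef]
  have hφpl : φp l = (-(u:ℂ)) := by simp [hφpdef, hkl.symm]
  have hφpo : ∀ j, j ≠ k → j ≠ l → φp j = 0 := by intro j h1 h2; simp [hφpdef, h1, h2]
  have hstar : ∀ x : ℝ, star ((x:ℝ):ℂ) = ((x:ℝ):ℂ) := fun x => by
    rw [Complex.star_def, Complex.conj_ofReal]
  have hc1 : cInner φ φ = 1 := by
    rw [cInner, sum_two' k l hkl _ (fun j h1 h2 => by rw [hφo j h1 h2]; simp)]
    rw [hφk, hφl]
    simp only [hstar]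
    rw [show ((u:ℂ) * u + (v:ℂ) * v) = ((u*u + v*v : ℝ) : ℂ) by push_cast; ring, huu, hvv]
    norm_num
  have hc2 : cInner φp φp = 1 := by
    rw [cInner, sum_two' k l hkl _ (fun j h1 h2 => by rw [hφpo j h1 h2]; simp)]
    rw [hφpk, hφpl]
    simp only [star_neg, hstar]
    rw [show ((v:ℂ) * v + -(u:ℂ) * -(u:ℂ)) = ((u*u + v*v : ℝ) : ℂ) by push_cast; ring, huu, hvv]
    norm_num
  have hc3 : cInner φ φp = 0 := by
    rw [cInner, sum_two' k l hkl _ (fun j h1 h2 => by rw [hφo j h1 h2]; simp)]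
    rw [hφk, hφl, hφpk, hφpl]
    simp only [hstar]
    ring
  have hval : gammaSummand M φ φp = 1 - (∑ i, Real.sqrt (m i k * m i l)) ^ 2 := by
    rw [gamma_repr m hpos M hMdef φ φp hc1]
    have e1 : (star (φ k) * φp k).re = u * v := by
      rw [hφk, hφpk, hstar, ← Complex.ofReal_mul, Complex.ofReal_re]
    have e2 : (star (φ l) * φp l).re = -(v * u) := by
      rw [hφl, hφpl, hstar, mul_neg, ← Complex.ofReal_mul, Complex.neg_re, Complex.ofReal_re]
    have hnum : ∀ i, ∑ j, m i j * (star (φ j) * φp j).re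
        = m i k * (u * v) + m i l * (-(v * u)) := by
      intro i
      rw [sum_two' k l hkl _ (fun j h1 h2 => by rw [hφo j h1 h2]; simp), e1, e2]
    have hden : ∀ i, ∑ j, m i j * Complex.normSq (φ j) = m i k * qs + m i l * (1 - qs) := by
      intro i
      rw [sum_two' k l hkl _ (fun j h1 h2 => by rw [hφo j h1 h2]; simp),
        hφk, hφl, Complex.normSq_ofReal, Complex.normSq_ofReal, huu, hvv]
    calc ∑ i, (∑ j, m i j * (star (φ j) * φp j).re) ^ 2 / (∑ j, m i j * Complex.normSq (φ j))
        = ∑ i, (m i k * (u * v) + m i l * (-(v * u))) ^ 2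
            / (m i k * qs + m i l * (1 - qs)) := by
          refine Finset.sum_congr rfl fun i _ => by rw [hnum i, hden i]
      _ = 1 - (∑ i, Real.sqrt (m i k * m i l)) ^ 2 :=
          coreB (fun i => m i k) (fun i => m i l) (fun i => hpos i k) (fun i => hpos i l)
            (hsum k) (hsum l) ρ ρ' hρ hρ' hall qs hqsdef
  have hmem : (1 - F ^ 2) ∈ {x : ℝ | ∃ φ φp : Fin d → ℂ,
      cInner φ φ = 1 ∧ cInner φp φp = 1 ∧ cInner φ φp = 0 ∧ x = gammaSummand M φ φp} :=
    ⟨φ, φp, hc1, hc2, hc3, by rw [hval, hFeq]⟩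
  unfold gammaPOVM
  exact le_antisymm (Real.sSup_le hub hnn) (le_csSup ⟨1 - F ^ 2, fun x hx => hub x hx⟩ hmem)
end
end

section
/- Fix integers D, d, r ≥ 1, a classically mixed differentiable state family ζ at θ₀ on ℂ^D with eigenvalue vector λ(θ), and a commuting-operator measurement M on ℂ^d with r outcomes and diagonal entry vectors m⁽ⁱ⁾ = (m₁⁽ⁱ⁾, …, m_d⁽ⁱ⁾). Then: (a) F^P(ζ₀, ζ₀', M) = sup over d×D stochastic matrices P of the classical Fisher information J(p, p') of the r-outcome distribution pᵢ = ⟨m⁽ⁱ⁾, Pλ₀⟩ with derivative p'ᵢ = ⟨m⁽ⁱ⁾, Pλ₀'⟩; and (b) if d = D, then F^U(ζ₀, ζ₀', M) ≤ sup over D×D doubly stochastic matrices P of the same classical Fisher information. -/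
open scoped Matrix Kronecker ComplexOrder
open Classical

noncomputable section

private lemma star_mul_self_c (z : ℂ) : star z * z = (Complex.normSq z : ℂ) := by
  rw [Complex.star_def, mul_comm, Complex.mul_conj]

private lemma aux_trace {d D κ : ℕ} (K : Fin κ → Matrix (Fin d) (Fin D) ℂ)
    (v : Fin D → ℝ) (w : Fin d → ℝ) :
    ((∑ l, K l * Matrix.diagonal (fun k => ((v k : ℝ) : ℂ)) * (K l)ᴴ) *
      Matrix.diagonal (fun j => ((w j : ℝ) : ℂ))).trace
    = ((w ⬝ᵥ ((Matrix.of fun j k => ∑ l, Complex.normSq (K l j k)) *ᵥ v) : ℝ) : ℂ) := by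
  have hz : ∀ z t : ℂ, z * t * star z = (Complex.normSq z : ℂ) * t := by
    intro z t
    rw [mul_right_comm, mul_comm z (star z), star_mul_self_c]
  simp only [Matrix.trace, Matrix.diag_apply, Matrix.mul_diagonal, Matrix.sum_apply,
    Matrix.mul_apply, Matrix.conjTranspose_apply, dotProduct, Matrix.mulVec,
    Matrix.of_apply, Matrix.diagonal_apply, mul_ite, ite_mul, mul_zero, zero_mul,
    Finset.sum_ite_eq, Finset.sum_ite_eq', Finset.mem_univ, if_true, hz]
  push_cast
  refine Finset.sum_congr rfl fun j _ => ?_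
  rw [mul_comm]
  congr 1
  rw [Finset.sum_comm]
  refine Finset.sum_congr rfl fun k _ => ?_
  rw [Finset.sum_mul]

private lemma aux_col {d D κ : ℕ} (K : Fin κ → Matrix (Fin d) (Fin D) ℂ)
    (hK : ∑ l, (K l)ᴴ * K l = 1) (k : Fin D) :
    ∑ j, ∑ l, Complex.normSq (K l j k) = 1 := by
  have h := congrFun (congrFun hK k) k
  simp only [Matrix.sum_apply, Matrix.mul_apply, Matrix.conjTranspose_apply,
    Matrix.one_apply_eq, star_mul_self_c] at h
  have h2 : ((∑ j, ∑ l, Complex.normSq (K l j k) : ℝ) : ℂ) = 1 := by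
    push_cast
    rw [← h, Finset.sum_comm]
  exact_mod_cast h2

private lemma classFisher_nonneg {r : ℕ} {p p' : Fin r → ℝ} (hp : ∀ i, 0 ≤ p i) :
    0 ≤ classFisher p p' := by
  refine Finset.sum_nonneg fun i _ => ?_
  by_cases h : p i = 0 <;> simp [h]
  exact div_nonneg (sq_nonneg _) (hp i)

private lemma dpi {r D : ℕ} (T : Fin r → Fin D → ℝ) (hT : ∀ i k, 0 ≤ T i k)
    (hTc : ∀ k, ∑ i, T i k = 1) (q q' : Fin D → ℝ) (hq : ∀ k, 0 ≤ q k)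
    (hsupp : ∀ k, q k = 0 → q' k = 0) :
    classFisher (fun i => ∑ k, T i k * q k) (fun i => ∑ k, T i k * q' k)
      ≤ classFisher q q' := by
  unfold classFisher
  have hRnn : ∀ i k, 0 ≤ T i k * (if q k = 0 then 0 else q' k ^ 2 / q k) := by
    intro i k
    by_cases h : q k = 0 <;> simp [h]
    exact mul_nonneg (hT i k) (div_nonneg (sq_nonneg _) (hq k))
  have key : ∀ i, (if (∑ k, T i k * q k) = 0 then 0
        else (∑ k, T i k * q' k) ^ 2 / (∑ k, T i k * q k))
      ≤ ∑ k, T i k * (if q k = 0 then 0 else q' k ^ 2 / q k) := by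
    intro i
    by_cases hp : (∑ k, T i k * q k) = 0
    · simpa [hp] using Finset.sum_nonneg fun k _ => hRnn i k
    · rw [if_neg hp]
      set s : Finset (Fin D) := Finset.univ.filter (fun k => 0 < T i k * q k) with hs
      have hmem : ∀ k, k ∈ s ↔ 0 < T i k * q k := by
        intro k; simp [hs]
      have hzero : ∀ k, k ∉ s → T i k * q k = 0 ∧ T i k * q' k = 0 := by
        intro k hk
        have h0 : T i k * q k = 0 := by
          rcases lt_or_eq_of_le (mul_nonneg (hT i k) (hq k)) with h | h
          · exact absurd ((hmem k).2 h) hk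
          · exact h.symm
        refine ⟨h0, ?_⟩
        rcases mul_eq_zero.1 h0 with h | h
        · rw [h, zero_mul]
        · rw [hsupp k h, mul_zero]
      have e1 : (∑ k, T i k * q' k) = ∑ k ∈ s, T i k * q' k := by
        refine (Finset.sum_subset (Finset.subset_univ s) ?_).symm
        intro k _ hk; exact (hzero k hk).2
      have e2 : (∑ k, T i k * q k) = ∑ k ∈ s, T i k * q k := by
        refine (Finset.sum_subset (Finset.subset_univ s) ?_).symm
        intro k _ hk; exact (hzero k hk).1
      rw [e1, e2]
      calc (∑ k ∈ s, T i k * q' k) ^ 2 / (∑ k ∈ s, T i k * q k)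
          ≤ ∑ k ∈ s, (T i k * q' k) ^ 2 / (T i k * q k) :=
            Finset.sq_sum_div_le_sum_sq_div s _ (fun k hk => (hmem k).1 hk)
        _ = ∑ k ∈ s, T i k * (if q k = 0 then 0 else q' k ^ 2 / q k) := by
            refine Finset.sum_congr rfl fun k hk => ?_
            have hpos := (hmem k).1 hk
            obtain ⟨h1, h2⟩ : 0 < T i k ∧ 0 < q k := by
              rcases mul_pos_iff.1 hpos with h | ⟨h1, _⟩
              · exact h
              · exact absurd h1 (not_lt.2 (hT i k))
            rw [if_neg h2.ne']
            field_simp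
        _ ≤ ∑ k, T i k * (if q k = 0 then 0 else q' k ^ 2 / q k) :=
            Finset.sum_le_sum_of_subset_of_nonneg (Finset.subset_univ s)
              (fun k _ _ => hRnn i k)
  calc ∑ i, (if (∑ k, T i k * q k) = 0 then 0
        else (∑ k, T i k * q' k) ^ 2 / (∑ k, T i k * q k))
      ≤ ∑ i, ∑ k, T i k * (if q k = 0 then 0 else q' k ^ 2 / q k) :=
        Finset.sum_le_sum fun i _ => key i
    _ = ∑ k, (∑ i, T i k) * (if q k = 0 then 0 else q' k ^ 2 / q k) := by
        rw [Finset.sum_comm]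
        exact Finset.sum_congr rfl fun k _ => (Finset.sum_mul ..).symm
    _ = ∑ k, (if q k = 0 then 0 else q' k ^ 2 / q k) := by
        refine Finset.sum_congr rfl fun k _ => ?_
        rw [hTc k, one_mul]

private def krausOf {d D : ℕ} (P : Matrix (Fin d) (Fin D) ℝ) :
    Fin (d * D) → Matrix (Fin d) (Fin D) ℂ :=
  fun l => Matrix.single (finProdFinEquiv.symm l).1 (finProdFinEquiv.symm l).2
    ((Real.sqrt (P (finProdFinEquiv.symm l).1 (finProdFinEquiv.symm l).2) : ℝ) : ℂ)

private lemma krausOf_normSq {d D : ℕ} (P : Matrix (Fin d) (Fin D) ℝ)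
    (hP : ∀ j k, 0 ≤ P j k) (j : Fin d) (k : Fin D) :
    ∑ l, Complex.normSq (krausOf P l j k) = P j k := by
  rw [← Equiv.sum_comp finProdFinEquiv
    (fun l => Complex.normSq (krausOf P l j k))]
  unfold krausOf
  simp only [Equiv.symm_apply_apply]
  rw [Fintype.sum_prod_type]
  simp only [Matrix.single, Matrix.of_apply]
  rw [Finset.sum_eq_single j, Finset.sum_eq_single k]
  · simp [Complex.normSq_ofReal, Real.mul_self_sqrt (hP j k)]
  · intro b _ hb
    rw [if_neg (by tauto)]
    simp
  · simp
  · intro a _ ha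
    rw [Finset.sum_eq_zero]
    intro b _
    rw [if_neg (by tauto)]
    simp
  · simp

private lemma krausOf_sum {d D : ℕ} (P : Matrix (Fin d) (Fin D) ℝ)
    (hP : ∀ j k, 0 ≤ P j k) (hPc : ∀ k, ∑ j, P j k = 1) :
    ∑ l, (krausOf P l)ᴴ * krausOf P l = 1 := by
  ext k kk
  rw [Matrix.sum_apply]
  rw [← Equiv.sum_comp finProdFinEquiv
    (fun l => ((krausOf P l)ᴴ * krausOf P l) k kk)]
  unfold krausOf
  simp only [Equiv.symm_apply_apply, Matrix.mul_apply, Matrix.conjTranspose_apply,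
    Matrix.single, Matrix.of_apply]
  rw [Fintype.sum_prod_type]
  by_cases hkk : k = kk
  · subst hkk
    rw [Matrix.one_apply_eq]
    have : ∀ a : Fin d, ∀ b : Fin D,
        (∑ j : Fin d, star (if a = j ∧ b = k then ((Real.sqrt (P a b) : ℝ) : ℂ) else 0) *
          (if a = j ∧ b = k then ((Real.sqrt (P a b) : ℝ) : ℂ) else 0))
        = if b = k then ((P a k : ℝ) : ℂ) else 0 := by
      intro a b
      rw [Finset.sum_eq_single a]
      · by_cases hb : b = k
        · subst hb
          rw [if_pos ⟨rfl, rfl⟩, star_mul_self_c, Complex.normSq_ofReal,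
            Real.mul_self_sqrt (hP a b), if_pos rfl]
        · simp [hb]
      · intro j _ hj
        rw [if_neg (by tauto)]
        simp
      · simp
    simp only [this]
    simp only [Finset.sum_ite_eq', Finset.mem_univ, if_true]
    rw [← Complex.ofReal_sum]
    norm_cast
    exact hPc k
  · rw [Matrix.one_apply_ne hkk]
    rw [Finset.sum_eq_zero]
    intro a _
    rw [Finset.sum_eq_zero]
    intro b _
    rw [Finset.sum_eq_zero]
    intro j _
    by_cases h1 : a = j ∧ b = k
    · have : ¬(a = j ∧ b = kk) := fun h2 => hkk (h1.2.symm.trans h2.2)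
      simp [this]
    · simp [h1]

private lemma fisher_eq {d D r κ : ℕ} (K : Fin κ → Matrix (Fin d) (Fin D) ℂ)
    (v v' : Fin D → ℝ) (m : Fin r → Fin d → ℝ) (M : Fin r → Matrix (Fin d) (Fin d) ℂ)
    (hMdef : ∀ i, M i = Matrix.diagonal fun j => ((m i j : ℝ) : ℂ)) :
    FisherInfo (∑ l, K l * Matrix.diagonal (fun k => ((v k : ℝ) : ℂ)) * (K l)ᴴ)
        (∑ l, K l * Matrix.diagonal (fun k => ((v' k : ℝ) : ℂ)) * (K l)ᴴ) M
      = classFisher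
          (fun i => m i ⬝ᵥ ((Matrix.of fun j k => ∑ l, Complex.normSq (K l j k)) *ᵥ v))
          (fun i => m i ⬝ᵥ ((Matrix.of fun j k => ∑ l, Complex.normSq (K l j k)) *ᵥ v')) := by
  unfold FisherInfo classFisher
  refine Finset.sum_congr rfl fun i _ => ?_
  rw [hMdef i, aux_trace, aux_trace]
  simp [Complex.ofReal_eq_zero]

private lemma dot_mulVec_eq {d D r : ℕ} (m : Fin r → Fin d → ℝ)
    (P : Matrix (Fin d) (Fin D) ℝ) (q : Fin D → ℝ) (i : Fin r) :
    m i ⬝ᵥ (P *ᵥ q) = ∑ k, (∑ j, m i j * P j k) * q k := by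
  simp only [dotProduct, Matrix.mulVec, Finset.mul_sum, Finset.sum_mul]
  rw [Finset.sum_comm]
  refine Finset.sum_congr rfl fun k _ => Finset.sum_congr rfl fun j _ => ?_
  ring


private lemma partb_aux {d r : ℕ} (q q' : Fin d → ℝ) (hq : ∀ k, 0 ≤ q k)
    (hsupp : ∀ k, q k = 0 → q' k = 0)
    (m : Fin r → Fin d → ℝ) (hm : ∀ i j, 0 ≤ m i j) (hmsum : ∀ j, ∑ i, m i j = 1)
    (M : Fin r → Matrix (Fin d) (Fin d) ℂ)
    (hMdef : ∀ i, M i = Matrix.diagonal fun j => ((m i j : ℝ) : ℂ)) :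
    QUPFI (Matrix.diagonal fun j => ((q j : ℝ) : ℂ))
        (Matrix.diagonal fun j => ((q' j : ℝ) : ℂ)) M
      ≤ sSup {x : ℝ | ∃ P : Matrix (Fin d) (Fin d) ℝ,
          (∀ j k, 0 ≤ P j k) ∧ (∀ k, ∑ j, P j k = 1) ∧ (∀ j, ∑ k, P j k = 1) ∧
          x = classFisher (fun i => m i ⬝ᵥ (P *ᵥ q)) (fun i => m i ⬝ᵥ (P *ᵥ q'))} := by
  have hdot : ∀ (P : Matrix (Fin d) (Fin d) ℝ) (s : Fin d → ℝ),
      (fun i => m i ⬝ᵥ (P *ᵥ s)) = fun i => ∑ k, (∑ j, m i j * P j k) * s k := by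
    intro P s; funext i; exact dot_mulVec_eq m P s i
  have hBdd : BddAbove {x : ℝ | ∃ P : Matrix (Fin d) (Fin d) ℝ,
      (∀ j k, 0 ≤ P j k) ∧ (∀ k, ∑ j, P j k = 1) ∧ (∀ j, ∑ k, P j k = 1) ∧
      x = classFisher (fun i => m i ⬝ᵥ (P *ᵥ q)) (fun i => m i ⬝ᵥ (P *ᵥ q'))} := by
    refine ⟨classFisher q q', ?_⟩
    rintro x ⟨P, hP1, hP2, _, rfl⟩
    rw [hdot P q, hdot P q']
    refine dpi _ (fun i k => Finset.sum_nonneg fun j _ => mul_nonneg (hm i j) (hP1 j k))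
      (fun k => ?_) q q' hq hsupp
    rw [Finset.sum_comm]
    calc ∑ j, ∑ i, m i j * P j k = ∑ j, (∑ i, m i j) * P j k := by
          exact Finset.sum_congr rfl fun j _ => (Finset.sum_mul ..).symm
      _ = ∑ j, P j k := by
          exact Finset.sum_congr rfl fun j _ => by rw [hmsum j, one_mul]
      _ = 1 := hP2 k
  unfold QUPFI
  refine Real.sSup_le ?_ ?_
  · rintro x ⟨U, hU, rfl⟩
    refine le_csSup hBdd ?_
    have hU1 : ∑ l : Fin 1, ((fun _ : Fin 1 => U) l)ᴴ * (fun _ : Fin 1 => U) l = 1 := by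
      rw [Fin.sum_univ_one]
      simpa [Matrix.star_eq_conjTranspose] using Matrix.mem_unitaryGroup_iff'.1 hU
    have hU2 : ∑ l : Fin 1, ((fun _ : Fin 1 => Uᴴ) l)ᴴ * (fun _ : Fin 1 => Uᴴ) l = 1 := by
      rw [Fin.sum_univ_one, Matrix.conjTranspose_conjTranspose]
      simpa [Matrix.star_eq_conjTranspose] using Matrix.mem_unitaryGroup_iff.1 hU
    refine ⟨Matrix.of fun j k => ∑ l : Fin 1, Complex.normSq ((fun _ : Fin 1 => U) l j k),
      fun j k => by
        simp only [Matrix.of_apply]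
        exact Finset.sum_nonneg fun _ _ => Complex.normSq_nonneg _,
      fun k => aux_col (fun _ : Fin 1 => U) hU1 k, fun j => ?_, ?_⟩
    · have h := aux_col (fun _ : Fin 1 => Uᴴ) hU2 j
      simpa [Matrix.conjTranspose_apply, Complex.star_def, Complex.normSq_conj] using h
    · have hrw : ∀ vv : Fin d → ℝ,
          U * Matrix.diagonal (fun k => ((vv k : ℝ) : ℂ)) * Uᴴ
          = ∑ l : Fin 1, (fun _ : Fin 1 => U) l *
              Matrix.diagonal (fun k => ((vv k : ℝ) : ℂ)) * ((fun _ : Fin 1 => U) l)ᴴ := by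
        intro vv; rw [Fin.sum_univ_one]
      rw [hrw q, hrw q', fisher_eq (fun _ : Fin 1 => U) q q' m M hMdef]
  · refine le_trans (classFisher_nonneg (p' := fun i => m i ⬝ᵥ ((1 : Matrix (Fin d) (Fin d) ℝ) *ᵥ q')) ?_)
      (le_csSup hBdd ⟨1, fun j k => ?_, fun k => ?_, fun j => ?_, rfl⟩)
    · intro i
      rw [Matrix.one_mulVec]
      exact Finset.sum_nonneg fun j _ => mul_nonneg (hm i j) (hq j)
    · by_cases hjk : j = k <;> simp [Matrix.one_apply, hjk]
    · simp [Matrix.one_apply]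
    · simp [Matrix.one_apply]

/-- for a classically mixed state and a commuting-operator measurement,
(a) the QPFI equals the classical Fisher information optimized over stochastic matrices, and
(b) when `d = D`, the unitary-preprocessing-optimized Fisher information is bounded by the
classical Fisher information optimized over doubly stochastic matrices. -/
theorem stmt13 {D d r : ℕ} (hD : 1 ≤ D) (hd : 1 ≤ d) (hr : 1 ≤ r)
    (lam : ℝ → Fin D → ℝ) (lam' : Fin D → ℝ) (θ₀ : ℝ)
    (hnn : ∀ θ j, 0 ≤ lam θ j) (hlsum : ∀ θ, ∑ j, lam θ j = 1)
    (hder : ∀ j, HasDerivAt (fun θ => lam θ j) (lam' j) θ₀)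
    (m : Fin r → Fin d → ℝ) (hm : ∀ i j, 0 ≤ m i j) (hmsum : ∀ j, ∑ i, m i j = 1)
    (M : Fin r → Matrix (Fin d) (Fin d) ℂ)
    (hMdef : ∀ i, M i = Matrix.diagonal fun j => ((m i j : ℝ) : ℂ)) :
    QPFI (Matrix.diagonal fun j => ((lam θ₀ j : ℝ) : ℂ))
        (Matrix.diagonal fun j => ((lam' j : ℝ) : ℂ)) M
      = sSup {x : ℝ | ∃ P : Matrix (Fin d) (Fin D) ℝ,
          (∀ j k, 0 ≤ P j k) ∧ (∀ k, ∑ j, P j k = 1) ∧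
          x = classFisher (fun i => m i ⬝ᵥ (P *ᵥ lam θ₀)) (fun i => m i ⬝ᵥ (P *ᵥ lam'))}
    ∧ ∀ (h : d = D),
        QUPFI (Matrix.diagonal fun j => ((lam θ₀ j : ℝ) : ℂ))
            (Matrix.diagonal fun j => ((lam' j : ℝ) : ℂ))
            (fun i => Matrix.reindex (finCongr h) (finCongr h) (M i))
          ≤ sSup {x : ℝ | ∃ P : Matrix (Fin D) (Fin D) ℝ,
              (∀ j k, 0 ≤ P j k) ∧ (∀ k, ∑ j, P j k = 1) ∧ (∀ j, ∑ k, P j k = 1) ∧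
              x = classFisher
                (fun i => (fun j => m i ((finCongr h.symm) j)) ⬝ᵥ (P *ᵥ lam θ₀))
                (fun i => (fun j => m i ((finCongr h.symm) j)) ⬝ᵥ (P *ᵥ lam'))} := by
  have hsupp : ∀ k, lam θ₀ k = 0 → lam' k = 0 := by
    intro k hk
    have hmin : IsLocalMin (fun θ => lam θ k) θ₀ :=
      Filter.Eventually.of_forall fun θ => by simpa [hk] using hnn θ k
    exact hmin.hasDerivAt_eq_zero (hder k)
  constructor
  · unfold QPFI
    refine congrArg sSup ?_
    ext x
    simp only [Set.mem_setOf_eq]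
    constructor
    · rintro ⟨E, ⟨κ, K, hK1, hK2⟩, rfl⟩
      refine ⟨Matrix.of fun j k => ∑ l, Complex.normSq (K l j k),
        fun j k => Finset.sum_nonneg fun l _ => Complex.normSq_nonneg _,
        fun k => aux_col K hK1 k, ?_⟩
      rw [hK2, hK2, fisher_eq K (lam θ₀) lam' m M hMdef]
    · rintro ⟨P, hP1, hP2, rfl⟩
      have hPK : (Matrix.of fun j k => ∑ l, Complex.normSq (krausOf P l j k)) = P := by
        ext j k; exact krausOf_normSq P hP1 j k
      refine ⟨fun σ => ∑ l, krausOf P l * σ * (krausOf P l)ᴴ,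
        ⟨d * D, krausOf P, krausOf_sum P hP1 hP2, fun σ => rfl⟩, ?_⟩
      rw [fisher_eq (krausOf P) (lam θ₀) lam' m M hMdef, hPK]
  · intro h
    subst h
    simpa only [finCongr_refl, Matrix.reindex_refl_refl, Equiv.refl_apply] using
      partb_aux (lam θ₀) lam' (hnn θ₀) hsupp m hm hmsum M hMdef
end
end

section
/- Fix integers D, d, r ≥ 1. Let λ ∈ ℝ^D with λᵢ ≥ 0 and Σᵢ λᵢ = 1, let λ' ∈ ℝ^D with Σᵢ λ'ᵢ = 0, and let m⁽¹⁾, …, m⁽ʳ⁾ ∈ ℝ^d have nonnegative entries with Σᵢ m⁽ⁱ⁾ equal to the all-ones vector. For a d×D stochastic matrix P let G(P) = J(p, p') be the classical Fisher information of pᵢ = ⟨m⁽ⁱ⁾, Pλ⟩ with derivative p'ᵢ = ⟨m⁽ⁱ⁾, Pλ'⟩. If the supremum of G over all d×D stochastic matrices is attained at some stochastic matrix, then it is attained at a coarse-graining stochastic matrix (one all of whose entries are 0 or 1). -/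
open scoped Matrix Kronecker ComplexOrder
open Classical

noncomputable section

private lemma cs_ineq (x y p q : ℝ) (hp : 0 < p) (hq : 0 < q) :
    (x + y)^2 / (p + q) ≤ x^2 / p + y^2 / q := by
  rw [div_add_div _ _ hp.ne' hq.ne', div_le_div_iff₀ (by positivity) (by positivity)]
  nlinarith [sq_nonneg (x*q - y*p)]

private lemma term_nonneg (a b : ℝ) (hb : 0 ≤ b) :
    0 ≤ if b = 0 then 0 else a^2 / b := by
  split_ifs with h
  · exact le_refl 0
  · have : 0 < b := lt_of_le_of_ne hb (Ne.symm h)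
    positivity

private lemma F_nonneg {r : ℕ} (x0 x1 y0 y1 : Fin r → ℝ)
    (hy0 : ∀ i, 0 ≤ y0 i) (hy1 : ∀ i, 0 ≤ y1 i) (s : ℝ) (hs0 : 0 ≤ s) (hs1 : s ≤ 1) :
    0 ≤ ∑ i, if (1-s)*y0 i + s*y1 i = 0 then 0
      else ((1-s)*x0 i + s*x1 i)^2 / ((1-s)*y0 i + s*y1 i) := by
  apply Finset.sum_nonneg
  intro i _
  exact term_nonneg _ _ (by have := hy0 i; have := hy1 i; nlinarith)

/-- If F is bounded on [0,1] and y0 i = 0 < y1 i, then x0 i must vanish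
(otherwise F blows up near 0). -/
private lemma endpoint_zero {r : ℕ} (x0 x1 y0 y1 : Fin r → ℝ)
    (hy0 : ∀ i, 0 ≤ y0 i) (hy1 : ∀ i, 0 ≤ y1 i)
    (F : ℝ → ℝ)
    (hF : ∀ s, F s = ∑ i, if (1-s)*y0 i + s*y1 i = 0 then 0
        else ((1-s)*x0 i + s*x1 i)^2 / ((1-s)*y0 i + s*y1 i))
    (B : ℝ) (hBnn : 0 ≤ B) (hB : ∀ s, 0 ≤ s → s ≤ 1 → F s ≤ B)
    (i : Fin r) (h0 : y0 i = 0) (h1 : y1 i ≠ 0) : x0 i = 0 := by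
  by_contra hx
  have hy1pos : 0 < y1 i := lt_of_le_of_ne (hy1 i) (Ne.symm h1)
  have hc : 0 < |x0 i| := abs_pos.mpr hx
  obtain ⟨s, hs_pos, hs1, hsS, hden_le⟩ :
      ∃ s : ℝ, 0 < s ∧ s ≤ 1 ∧ s*(|x0 i| + |x1 i|) ≤ |x0 i|/2 ∧
        s * y1 i ≤ (|x0 i|^2/4)/(B+1) := by
    set c := |x0 i|
    set S := |x0 i| + |x1 i| with hSdef
    have hS : 0 ≤ S := by positivity
    have hcS : c ≤ S := by rw [hSdef]; linarith [abs_nonneg (x1 i)]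
    refine ⟨min (c/(2*(S+1))) ((c^2/4)/(y1 i*(B+1))), lt_min (by positivity) (by positivity),
      ?_, ?_, ?_⟩
    · have h2 : c/(2*(S+1)) ≤ 1 := by
        rw [div_le_one (by positivity)]
        linarith
      exact le_trans (min_le_left _ _) h2
    · have hle : min (c/(2*(S+1))) ((c^2/4)/(y1 i*(B+1))) ≤ c/(2*(S+1)) := min_le_left _ _
      have h6 := (le_div_iff₀ (by positivity : (0:ℝ) < 2*(S+1))).mp hle
      nlinarith [lt_min (show (0:ℝ) < c/(2*(S+1)) by positivity)
        (show (0:ℝ) < (c^2/4)/(y1 i*(B+1)) by positivity)]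
    · have hle : min (c/(2*(S+1))) ((c^2/4)/(y1 i*(B+1))) ≤ (c^2/4)/(y1 i*(B+1)) :=
        min_le_right _ _
      have := mul_le_mul_of_nonneg_right hle hy1pos.le
      calc min (c/(2*(S+1))) ((c^2/4)/(y1 i*(B+1))) * y1 i
          ≤ (c^2/4)/(y1 i*(B+1)) * y1 i := this
        _ = (c^2/4)/(B+1) := by field_simp
  -- numerator lower bound
  have hnum : |x0 i|/2 ≤ |(1-s)*x0 i + s*x1 i| := by
    have e : (1-s)*x0 i + s*x1 i = x0 i + s*(x1 i - x0 i) := by ring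
    have h3 : |x0 i| - |s*(x1 i - x0 i)| ≤ |x0 i + s*(x1 i - x0 i)| := by
      simpa using abs_sub_abs_le_abs_sub (x0 i) (-(s*(x1 i - x0 i)))
    have h4 : |s*(x1 i - x0 i)| ≤ s * (|x0 i| + |x1 i|) := by
      rw [abs_mul, abs_of_pos hs_pos]
      have h5 : |x1 i - x0 i| ≤ |x0 i| + |x1 i| := by
        have := abs_sub (x1 i) (x0 i)
        linarith
      exact mul_le_mul_of_nonneg_left h5 hs_pos.le
    rw [e]
    linarith
  have hnum2 : |x0 i|^2/4 ≤ ((1-s)*x0 i + s*x1 i)^2 := by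
    nlinarith [sq_abs ((1-s)*x0 i + s*x1 i), abs_nonneg ((1-s)*x0 i + s*x1 i)]
  have hden_pos : 0 < s * y1 i := by positivity
  -- the term at s exceeds B
  have hterm : B + 1 ≤ ((1-s)*x0 i + s*x1 i)^2 / ((1-s)*y0 i + s*y1 i) := by
    have hden : (1-s)*y0 i + s*y1 i = s * y1 i := by rw [h0]; ring
    rw [hden, le_div_iff₀ hden_pos]
    calc (B+1) * (s * y1 i) ≤ (B+1) * ((|x0 i|^2/4)/(B+1)) :=
          mul_le_mul_of_nonneg_left hden_le (by linarith)
      _ = |x0 i|^2/4 := by field_simp <;> ring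
      _ ≤ _ := hnum2
  -- F s is at least the term
  have hFs : B + 1 ≤ F s := by
    rw [hF]
    have hne : (1-s)*y0 i + s*y1 i ≠ 0 := by
      have hden : (1-s)*y0 i + s*y1 i = s * y1 i := by rw [h0]; ring
      rw [hden]; exact hden_pos.ne'
    calc B + 1 ≤ ((1-s)*x0 i + s*x1 i)^2 / ((1-s)*y0 i + s*y1 i) := hterm
      _ = if (1-s)*y0 i + s*y1 i = 0 then 0
          else ((1-s)*x0 i + s*x1 i)^2 / ((1-s)*y0 i + s*y1 i) := by rw [if_neg hne]
      _ ≤ _ :=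
          Finset.single_le_sum
            (f := fun i' => if (1-s)*y0 i' + s*y1 i' = 0 then 0
              else ((1-s)*x0 i' + s*x1 i')^2 / ((1-s)*y0 i' + s*y1 i'))
            (fun i' _ => term_nonneg _ _
              (by have := hy0 i'; have := hy1 i'; nlinarith)) (Finset.mem_univ i)
  linarith [hB s hs_pos.le hs1]

/-- If F(t) is a max of F over [0,1] with 0<t<1, both endpoints are also maxima. -/
private lemma seg_max {r : ℕ} (x0 x1 y0 y1 : Fin r → ℝ)
    (hy0 : ∀ i, 0 ≤ y0 i) (hy1 : ∀ i, 0 ≤ y1 i)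
    (F : ℝ → ℝ)
    (hF : ∀ s, F s = ∑ i, if (1-s)*y0 i + s*y1 i = 0 then 0
        else ((1-s)*x0 i + s*x1 i)^2 / ((1-s)*y0 i + s*y1 i))
    (t : ℝ) (ht0 : 0 < t) (ht1 : t < 1)
    (hmax : ∀ s, 0 ≤ s → s ≤ 1 → F s ≤ F t) :
    F 0 = F t := by
  have hFtnn : 0 ≤ F t := by
    rw [hF]; exact F_nonneg x0 x1 y0 y1 hy0 hy1 t ht0.le ht1.le
  -- endpoint vanishing of numerators
  have hz0 : ∀ i, y0 i = 0 → y1 i ≠ 0 → x0 i = 0 :=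
    endpoint_zero x0 x1 y0 y1 hy0 hy1 F hF (F t) hFtnn hmax
  have hz1 : ∀ i, y1 i = 0 → y0 i ≠ 0 → x1 i = 0 := by
    have hF' : ∀ s, F (1-s) = ∑ i, if (1-s)*y1 i + s*y0 i = 0 then 0
        else ((1-s)*x1 i + s*x0 i)^2 / ((1-s)*y1 i + s*y0 i) := by
      intro s
      rw [hF]
      refine Finset.sum_congr rfl fun i _ => ?_
      have e1 : (1-(1-s))*y0 i + (1-s)*y1 i = (1-s)*y1 i + s*y0 i := by ring
      have e2 : (1-(1-s))*x0 i + (1-s)*x1 i = (1-s)*x1 i + s*x0 i := by ring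
      rw [e1, e2]
    exact endpoint_zero x1 x0 y1 y0 hy1 hy0 (fun s => F (1-s)) hF' (F t) hFtnn
      (fun s hs1 hs2 => hmax (1-s) (by linarith) (by linarith))
  -- simplified endpoint formulas
  have hF0 : F 0 = ∑ i, if y0 i = 0 then 0 else (x0 i)^2 / y0 i := by
    rw [hF]
    refine Finset.sum_congr rfl fun i _ => ?_
    have e1 : (1-(0:ℝ))*y0 i + 0*y1 i = y0 i := by ring
    have e2 : (1-(0:ℝ))*x0 i + 0*x1 i = x0 i := by ring
    rw [e1, e2]
  have hF1 : F 1 = ∑ i, if y1 i = 0 then 0 else (x1 i)^2 / y1 i := by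
    rw [hF]
    refine Finset.sum_congr rfl fun i _ => ?_
    have e1 : (1-(1:ℝ))*y0 i + 1*y1 i = y1 i := by ring
    have e2 : (1-(1:ℝ))*x0 i + 1*x1 i = x1 i := by ring
    rw [e1, e2]
  -- convexity along the segment
  have key : F t ≤ (1-t) * F 0 + t * F 1 := by
    rw [hF t, hF0, hF1, Finset.mul_sum, Finset.mul_sum, ← Finset.sum_add_distrib]
    refine Finset.sum_le_sum fun i _ => ?_
    by_cases h0 : y0 i = 0
    · by_cases h1 : y1 i = 0
      · have : (1-t)*y0 i + t*y1 i = 0 := by rw [h0, h1]; ring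
        rw [if_pos this, if_pos h0, if_pos h1]
        norm_num
      · have hx0 : x0 i = 0 := hz0 i h0 h1
        have hy1p : 0 < y1 i := lt_of_le_of_ne (hy1 i) (Ne.symm h1)
        have hden : (1-t)*y0 i + t*y1 i = t * y1 i := by rw [h0]; ring
        have hne : (1-t)*y0 i + t*y1 i ≠ 0 := by rw [hden]; positivity
        rw [if_neg hne, if_pos h0, if_neg h1, hden, hx0]
        have ht : t ≠ 0 := ht0.ne'
        have e : ((1-t)*0 + t*x1 i)^2/(t*y1 i) = (1-t)*0 + t*(x1 i^2/y1 i) := by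
          field_simp <;> ring
        rw [e]
    · by_cases h1 : y1 i = 0
      · have hx1 : x1 i = 0 := hz1 i h1 h0
        have hy0p : 0 < y0 i := lt_of_le_of_ne (hy0 i) (Ne.symm h0)
        have hden : (1-t)*y0 i + t*y1 i = (1-t) * y0 i := by rw [h1]; ring
        have h1t : (0:ℝ) < 1 - t := by linarith
        have hne : (1-t)*y0 i + t*y1 i ≠ 0 := by
          rw [hden]; exact (mul_pos h1t hy0p).ne'
        rw [if_neg hne, if_pos h1, if_neg h0, hden, hx1]
        have h1t' : (1:ℝ) - t ≠ 0 := h1t.ne'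
        have e : ((1-t)*x0 i + t*0)^2/((1-t)*y0 i) = (1-t)*(x0 i^2/y0 i) + t*0 := by
          field_simp <;> ring
        rw [e]
      · have hy0p : 0 < y0 i := lt_of_le_of_ne (hy0 i) (Ne.symm h0)
        have hy1p : 0 < y1 i := lt_of_le_of_ne (hy1 i) (Ne.symm h1)
        have h1t : (0:ℝ) < 1 - t := by linarith
        have hp : 0 < (1-t)*y0 i := mul_pos h1t hy0p
        have hq : 0 < t*y1 i := mul_pos ht0 hy1p
        have hne : (1-t)*y0 i + t*y1 i ≠ 0 := by positivity
        rw [if_neg hne, if_neg h0, if_neg h1]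
        calc ((1-t)*x0 i + t*x1 i)^2 / ((1-t)*y0 i + t*y1 i)
            ≤ ((1-t)*x0 i)^2/((1-t)*y0 i) + (t*x1 i)^2/(t*y1 i) := cs_ineq _ _ _ _ hp hq
          _ = (1-t)*(x0 i^2/y0 i) + t*(x1 i^2/y1 i) := by
              rw [mul_pow, mul_pow]
              field_simp
  have h0le := hmax 0 le_rfl (by norm_num)
  have h1le := hmax 1 zero_le_one le_rfl
  nlinarith [h0le, h1le, key]


/-- Perturbation of a matrix in two entries of one column. -/
private def pert {d D : ℕ} (P : Matrix (Fin d) (Fin D) ℝ) (j j' : Fin d) (k : Fin D) (w : ℝ) :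
    Matrix (Fin d) (Fin D) ℝ :=
  fun a b => P a b + (if a = j ∧ b = k then w else if a = j' ∧ b = k then -w else 0)

private lemma pert_sum {d D : ℕ} (P : Matrix (Fin d) (Fin D) ℝ) (j j' : Fin d) (k : Fin D)
    (hjj' : j ≠ j') (w : ℝ) (hsum : ∀ k', ∑ a, P a k' = 1) (k' : Fin D) :
    ∑ a, pert P j j' k w a k' = 1 := by
  unfold pert
  rw [Finset.sum_add_distrib, hsum k']
  by_cases hk : k' = k
  · subst hk
    have he : ∀ a : Fin d, (if a = j ∧ k' = k' then w else if a = j' ∧ k' = k' then -w else (0:ℝ))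
        = (if a = j then w else 0) + (if a = j' then -w else 0) := by
      intro a
      by_cases h1 : a = j <;> by_cases h2 : a = j' <;> simp_all
    rw [Finset.sum_congr rfl fun a _ => he a, Finset.sum_add_distrib]
    simp
  · have he : ∀ a : Fin d, (if a = j ∧ k' = k then w else if a = j' ∧ k' = k then -w else (0:ℝ)) = 0 := by
      intro a; simp [hk]
    rw [Finset.sum_congr rfl fun a _ => he a]
    simp

private lemma pert_combo {d D : ℕ} (P : Matrix (Fin d) (Fin D) ℝ) (j j' : Fin d) (k : Fin D)
    (s w0 w1 : ℝ) :
    (1-s) • pert P j j' k w0 + s • pert P j j' k w1 = pert P j j' k ((1-s)*w0 + s*w1) := by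
  ext a b
  simp only [Matrix.add_apply, Matrix.smul_apply, smul_eq_mul, pert]
  split_ifs <;> ring

private lemma pert_zero {d D : ℕ} (P : Matrix (Fin d) (Fin D) ℝ) (j j' : Fin d) (k : Fin D) :
    pert P j j' k 0 = P := by
  ext a b
  simp [pert]

/-- in the classical preprocessing problem, if the supremum of the Fisher
information over stochastic matrices is attained, then it is attained at a coarse-graining
stochastic matrix (all entries 0 or 1). -/
theorem stmt14 {D d r : ℕ} (hD : 1 ≤ D) (hd : 1 ≤ d) (hr : 1 ≤ r)
    (lam : Fin D → ℝ) (hlam : ∀ i, 0 ≤ lam i) (hlsum : ∑ i, lam i = 1)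
    (lam' : Fin D → ℝ) (hl'sum : ∑ i, lam' i = 0)
    (m : Fin r → Fin d → ℝ) (hm : ∀ i j, 0 ≤ m i j) (hmsum : ∀ j, ∑ i, m i j = 1)
    (G : Matrix (Fin d) (Fin D) ℝ → ℝ)
    (hG : ∀ P, G P = classFisher (fun i => m i ⬝ᵥ (P *ᵥ lam)) (fun i => m i ⬝ᵥ (P *ᵥ lam')))
    (hatt : ∃ P : Matrix (Fin d) (Fin D) ℝ,
      (∀ j k, 0 ≤ P j k) ∧ (∀ k, ∑ j, P j k = 1) ∧
      ∀ Q : Matrix (Fin d) (Fin D) ℝ,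
        (∀ j k, 0 ≤ Q j k) → (∀ k, ∑ j, Q j k = 1) → G Q ≤ G P) :
    ∃ P : Matrix (Fin d) (Fin D) ℝ,
      (∀ j k, 0 ≤ P j k) ∧ (∀ k, ∑ j, P j k = 1) ∧
      (∀ j k, P j k = 0 ∨ P j k = 1) ∧
      ∀ Q : Matrix (Fin d) (Fin D) ℝ,
        (∀ j k, 0 ≤ Q j k) → (∀ k, ∑ j, Q j k = 1) → G Q ≤ G P := by
  obtain ⟨P0, hP0nn, hP0sum, hP0max⟩ := hatt
  suffices H : ∀ n (P : Matrix (Fin d) (Fin D) ℝ),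
      (∀ j k, 0 ≤ P j k) → (∀ k, ∑ j, P j k = 1) →
      (∀ Q : Matrix (Fin d) (Fin D) ℝ,
        (∀ j k, 0 ≤ Q j k) → (∀ k, ∑ j, Q j k = 1) → G Q ≤ G P) →
      (Finset.univ.filter
        (fun jk : Fin d × Fin D => P jk.1 jk.2 ≠ 0 ∧ P jk.1 jk.2 ≠ 1)).card ≤ n →
      ∃ P' : Matrix (Fin d) (Fin D) ℝ,
        (∀ j k, 0 ≤ P' j k) ∧ (∀ k, ∑ j, P' j k = 1) ∧
        (∀ j k, P' j k = 0 ∨ P' j k = 1) ∧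
        ∀ Q : Matrix (Fin d) (Fin D) ℝ,
          (∀ j k, 0 ≤ Q j k) → (∀ k, ∑ j, Q j k = 1) → G Q ≤ G P' by
    exact H _ P0 hP0nn hP0sum hP0max le_rfl
  intro n
  induction n with
  | zero =>
    intro P hnn hsum hmax hcard
    refine ⟨P, hnn, hsum, ?_, hmax⟩
    intro j k
    by_contra hc
    push_neg at hc
    have hmem : (j,k) ∈ Finset.univ.filter
        (fun jk : Fin d × Fin D => P jk.1 jk.2 ≠ 0 ∧ P jk.1 jk.2 ≠ 1) :=
      Finset.mem_filter.mpr ⟨Finset.mem_univ _, hc.1, hc.2⟩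
    have := Finset.card_pos.mpr ⟨_, hmem⟩
    omega
  | succ n ih =>
    intro P hnn hsum hmax hcard
    by_cases hall : ∀ j k, P j k = 0 ∨ P j k = 1
    · exact ⟨P, hnn, hsum, hall, hmax⟩
    push_neg at hall
    obtain ⟨j, k, hjk⟩ := hall
    obtain ⟨hjk0, hjk1⟩ := hjk
    have ha0 : 0 < P j k := lt_of_le_of_ne (hnn j k) (Ne.symm hjk0)
    have hale : P j k ≤ 1 := by
      have h := Finset.single_le_sum (f := fun j' => P j' k) (fun j' _ => hnn j' k)
        (Finset.mem_univ j)
      rw [hsum k] at h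
      exact h
    have ha1 : P j k < 1 := lt_of_le_of_ne hale hjk1
    -- find a second fractional entry in column k
    obtain ⟨j', hj'j, hb0, hb1⟩ : ∃ j', j' ≠ j ∧ P j' k ≠ 0 ∧ P j' k ≠ 1 := by
      by_contra hcon
      push_neg at hcon
      by_cases hone : ∃ j'', j'' ≠ j ∧ P j'' k = 1
      · obtain ⟨j'', hne, h1⟩ := hone
        have hsub : ({j, j''} : Finset (Fin d)) ⊆ Finset.univ := Finset.subset_univ _
        have hle := Finset.sum_le_sum_of_subset_of_nonneg hsub
          (fun a _ _ => hnn a k) (f := fun a => P a k)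
        rw [Finset.sum_pair (Ne.symm hne)] at hle
        rw [hsum k] at hle
        rw [h1] at hle
        linarith
      · push_neg at hone
        have hzero : ∀ j'', j'' ≠ j → P j'' k = 0 := by
          intro j'' hne
          by_contra hz
          exact hone j'' hne (hcon j'' hne hz)
        have : ∑ a, P a k = P j k := Finset.sum_eq_single j
          (fun b _ hb => hzero b hb) (fun h => absurd (Finset.mem_univ j) h)
        rw [hsum k] at this
        exact hjk1 this.symm
    have hb0' : 0 < P j' k := lt_of_le_of_ne (hnn j' k) (Ne.symm hb0)
    have hpair : P j k + P j' k ≤ 1 := by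
      have hsub : ({j, j'} : Finset (Fin d)) ⊆ Finset.univ := Finset.subset_univ _
      have hle := Finset.sum_le_sum_of_subset_of_nonneg hsub
        (fun a _ _ => hnn a k) (f := fun a => P a k)
      rw [Finset.sum_pair (Ne.symm hj'j), hsum k] at hle
      exact hle
    have hb1' : P j' k < 1 := by linarith
    set u := min (P j k) (1 - P j' k) with hu
    set v := min (1 - P j k) (P j' k) with hv
    have hupos : 0 < u := lt_min ha0 (by linarith)
    have hvpos : 0 < v := lt_min (by linarith) hb0'
    have hua : u ≤ P j k := min_le_left _ _
    have hub : u ≤ 1 - P j' k := min_le_right _ _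
    have hva : v ≤ 1 - P j k := min_le_left _ _
    have hvb : v ≤ P j' k := min_le_right _ _
    have huv : 0 < u + v := by linarith
    set t := u / (u + v) with htdef
    have ht0 : 0 < t := by positivity
    have ht1 : t < 1 := by rw [htdef, div_lt_one huv]; linarith
    -- nonnegativity of perturbed matrices
    have hQnn : ∀ w, -u ≤ w → w ≤ v → ∀ a b, 0 ≤ pert P j j' k w a b := by
      intro w hw1 hw2 a b
      unfold pert
      split_ifs with h1 h2
      · obtain ⟨e1, e2⟩ := h1; subst e1; subst e2; linarith
      · obtain ⟨e1, e2⟩ := h2; subst e1; subst e2; linarith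
      · simpa using hnn a b
    have hjj' : j ≠ j' := Ne.symm hj'j
    set Q0 := pert P j j' k (-u) with hQ0def
    set Q1 := pert P j j' k v with hQ1def
    have hQ0nn : ∀ a b, 0 ≤ Q0 a b := hQnn (-u) le_rfl (by linarith)
    have hQ1nn : ∀ a b, 0 ≤ Q1 a b := hQnn v (by linarith) le_rfl
    have hQ0sum : ∀ k', ∑ a, Q0 a k' = 1 := pert_sum P j j' k hjj' (-u) hsum
    have hQ1sum : ∀ k', ∑ a, Q1 a k' = 1 := pert_sum P j j' k hjj' v hsum
    -- the segment
    have hcombo : ∀ s : ℝ, (1-s) • Q0 + s • Q1 = pert P j j' k (s*(u+v) - u) := by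
      intro s
      rw [hQ0def, hQ1def, pert_combo]
      congr 1
      ring
    have hcombot : (1-t) • Q0 + t • Q1 = P := by
      rw [hcombo t]
      have : t*(u+v) - u = 0 := by rw [htdef]; field_simp; ring
      rw [this, pert_zero]
    -- Fisher data along the segment
    set F : ℝ → ℝ := fun s => G ((1-s) • Q0 + s • Q1) with hFdef
    have hlin : ∀ (s : ℝ) (vv : Fin D → ℝ) (i : Fin r),
        m i ⬝ᵥ (((1-s) • Q0 + s • Q1) *ᵥ vv)
          = (1-s)*(m i ⬝ᵥ (Q0 *ᵥ vv)) + s*(m i ⬝ᵥ (Q1 *ᵥ vv)) := by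
      intro s vv i
      rw [Matrix.add_mulVec, Matrix.smul_mulVec, Matrix.smul_mulVec,
        dotProduct_add, dotProduct_smul, dotProduct_smul, smul_eq_mul, smul_eq_mul]
    have hF : ∀ s, F s = ∑ i,
        if (1-s)*((fun i => m i ⬝ᵥ (Q0 *ᵥ lam)) i) + s*((fun i => m i ⬝ᵥ (Q1 *ᵥ lam)) i) = 0
        then 0
        else ((1-s)*((fun i => m i ⬝ᵥ (Q0 *ᵥ lam')) i) + s*((fun i => m i ⬝ᵥ (Q1 *ᵥ lam')) i))^2
          / ((1-s)*((fun i => m i ⬝ᵥ (Q0 *ᵥ lam)) i) + s*((fun i => m i ⬝ᵥ (Q1 *ᵥ lam)) i)) := by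
      intro s
      rw [hFdef]
      dsimp only
      rw [hG, classFisher]
      exact Finset.sum_congr rfl fun i _ => by rw [hlin, hlin]
    have hdotnn : ∀ (Q : Matrix (Fin d) (Fin D) ℝ), (∀ a b, 0 ≤ Q a b) →
        ∀ i, 0 ≤ m i ⬝ᵥ (Q *ᵥ lam) := by
      intro Q hQ i
      rw [dotProduct]
      refine Finset.sum_nonneg fun a _ => mul_nonneg (hm i a) ?_
      rw [Matrix.mulVec, dotProduct]
      exact Finset.sum_nonneg fun b _ => mul_nonneg (hQ a b) (hlam b)
    have hmaxF : ∀ s, 0 ≤ s → s ≤ 1 → F s ≤ F t := by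
      intro s hs0 hs1
      have hFt : F t = G P := by rw [hFdef]; dsimp only; rw [hcombot]
      rw [hFt, hFdef]
      dsimp only
      rw [hcombo s]
      apply hmax
      · exact hQnn _ (by nlinarith) (by nlinarith)
      · exact pert_sum P j j' k hjj' _ hsum
    have hkey : F 0 = F t :=
      seg_max (fun i => m i ⬝ᵥ (Q0 *ᵥ lam')) (fun i => m i ⬝ᵥ (Q1 *ᵥ lam'))
        (fun i => m i ⬝ᵥ (Q0 *ᵥ lam)) (fun i => m i ⬝ᵥ (Q1 *ᵥ lam))
        (hdotnn Q0 hQ0nn) (hdotnn Q1 hQ1nn) F hF t ht0 ht1 hmaxF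
    -- Q0 is a maximizer
    have hGQ0 : G Q0 = G P := by
      have h0 : F 0 = G Q0 := by
        rw [hFdef]; dsimp only
        norm_num
      have hFt : F t = G P := by rw [hFdef]; dsimp only; rw [hcombot]
      rw [← h0, hkey, hFt]
    have hQ0max : ∀ Q : Matrix (Fin d) (Fin D) ℝ,
        (∀ a b, 0 ≤ Q a b) → (∀ k', ∑ a, Q a k' = 1) → G Q ≤ G Q0 := by
      intro Q h1 h2
      rw [hGQ0]
      exact hmax Q h1 h2
    -- the filter strictly decreases
    have hfrac0 : Q0 j k = P j k - u := by
      rw [hQ0def]; unfold pert; simp; ring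
    have hfrac1 : Q0 j' k = P j' k + u := by
      rw [hQ0def]; unfold pert
      simp [hj'j]
    have hsubset : (Finset.univ.filter
        (fun jk : Fin d × Fin D => Q0 jk.1 jk.2 ≠ 0 ∧ Q0 jk.1 jk.2 ≠ 1)) ⊆
        (Finset.univ.filter
        (fun jk : Fin d × Fin D => P jk.1 jk.2 ≠ 0 ∧ P jk.1 jk.2 ≠ 1)) := by
      intro x hx
      rw [Finset.mem_filter] at hx ⊢
      refine ⟨Finset.mem_univ _, ?_⟩
      by_cases hc1 : x.1 = j ∧ x.2 = k
      · rw [hc1.1, hc1.2]; exact ⟨hjk0, hjk1⟩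
      · by_cases hc2 : x.1 = j' ∧ x.2 = k
        · rw [hc2.1, hc2.2]; exact ⟨hb0, hb1⟩
        · have : Q0 x.1 x.2 = P x.1 x.2 := by
            rw [hQ0def]; unfold pert
            rw [if_neg hc1, if_neg hc2]; ring
          rw [← this]; exact hx.2
    have hstrict : (Finset.univ.filter
        (fun jk : Fin d × Fin D => Q0 jk.1 jk.2 ≠ 0 ∧ Q0 jk.1 jk.2 ≠ 1)).card <
        (Finset.univ.filter
        (fun jk : Fin d × Fin D => P jk.1 jk.2 ≠ 0 ∧ P jk.1 jk.2 ≠ 1)).card := by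
      apply Finset.card_lt_card
      rw [Finset.ssubset_iff_of_subset hsubset]
      rcases le_total (P j k) (1 - P j' k) with hc | hc
      · refine ⟨(j, k), Finset.mem_filter.mpr ⟨Finset.mem_univ _, hjk0, hjk1⟩, ?_⟩
        rw [Finset.mem_filter]
        push_neg
        intro _ h
        exfalso
        apply h
        rw [hfrac0, hu, min_eq_left hc]
        ring
      · refine ⟨(j', k), Finset.mem_filter.mpr ⟨Finset.mem_univ _, hb0, hb1⟩, ?_⟩
        rw [Finset.mem_filter]
        push_neg
        intro _ _
        rw [hfrac1, hu, min_eq_right hc]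
        ring
    exact ih Q0 hQ0nn hQ0sum hQ0max (by omega)
end
end

section
/- Fix integers D, d, r ≥ 1, a classically mixed differentiable state family ζ at θ₀ on ℂ^D, and a commuting-operator measurement M on ℂ^d with r outcomes. Then there exists a d×D coarse-graining stochastic matrix P (each column has exactly one entry equal to 1 and the rest 0) such that the coarse-graining channel ℰ(σ) = Σ_{ℓ,k} P_{ℓk}·σ_{kk}·E_{ℓℓ} (where σ_{kk} is the (k,k) entry of σ and E_{ℓℓ} is the d×d matrix unit with a 1 in position (ℓ,ℓ)), which is a quantum channel from D×D to d×d matrices, satisfies F(ℰ(ζ₀), ℰ(ζ₀'), M) = F^P(ζ₀, ζ₀', M). In particular, the supremum defining F^P(ζ₀, ζ₀', M) is always attained. -/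
open scoped Matrix Kronecker ComplexOrder
open Classical

noncomputable section

lemma perspective_le {ι : Type*} [Fintype ι] (w a b : ι → ℝ)
    (hw : ∀ f, 0 ≤ w f) (ha : ∀ f, 0 ≤ a f) (hab : ∀ f, a f = 0 → b f = 0) :
    (if (∑ f, w f * a f) = 0 then (0:ℝ) else (∑ f, w f * b f)^2 / (∑ f, w f * a f))
      ≤ ∑ f, w f * (if a f = 0 then 0 else (b f)^2 / a f) := by
  have hRHS : 0 ≤ ∑ f, w f * (if a f = 0 then 0 else (b f)^2 / a f) := by
    refine Finset.sum_nonneg fun f _ => mul_nonneg (hw f) ?_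
    split
    · exact le_refl 0
    · exact div_nonneg (sq_nonneg _) (ha f)
  split_ifs with h
  · exact hRHS
  · set u : ι → ℝ := fun f => Real.sqrt (w f * a f) with hu
    set v : ι → ℝ := fun f => if a f = 0 then 0 else Real.sqrt (w f) * b f / Real.sqrt (a f) with hv
    have huv : ∀ f, u f * v f = w f * b f := by
      intro f
      by_cases h0 : a f = 0
      · simp [hu, hv, h0, hab f h0]
      · have haf : 0 < a f := lt_of_le_of_ne (ha f) (Ne.symm h0)
        have hsa : Real.sqrt (a f) ≠ 0 := by positivity
        simp only [hu, hv, if_neg h0]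
        rw [Real.sqrt_mul (hw f)]
        field_simp
        ring_nf
        rw [Real.sq_sqrt (hw f)]
        ring
    have hu2 : ∀ f, u f ^ 2 = w f * a f := fun f => Real.sq_sqrt (mul_nonneg (hw f) (ha f))
    have hv2 : ∀ f, v f ^ 2 = w f * (if a f = 0 then 0 else (b f)^2 / a f) := by
      intro f
      by_cases h0 : a f = 0
      · simp [hv, h0]
      · simp only [hv, if_neg h0]
        rw [div_pow, mul_pow, Real.sq_sqrt (hw f), Real.sq_sqrt (ha f)]
        ring
    have hCS := Finset.sum_mul_sq_le_sq_mul_sq Finset.univ u v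
    have hsumnn : 0 ≤ ∑ f, w f * a f :=
      Finset.sum_nonneg fun f _ => mul_nonneg (hw f) (ha f)
    have hpos : 0 < ∑ f, w f * a f := lt_of_le_of_ne hsumnn (Ne.symm h)
    rw [div_le_iff₀ hpos]
    calc (∑ f, w f * b f)^2 = (∑ f, u f * v f)^2 := by simp_rw [huv]
      _ ≤ (∑ f, u f ^2) * (∑ f, v f ^2) := hCS
      _ = (∑ f, w f * (if a f = 0 then 0 else (b f)^2 / a f)) * (∑ f, w f * a f) := by
          simp_rw [hu2, hv2]; ring

lemma marginal {D d : ℕ} (c : Fin d → Fin D → ℝ) (hc : ∀ k, ∑ j, c j k = 1)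
    (k : Fin D) (G : Fin d → ℝ) :
    ∑ f : Fin D → Fin d, (∏ k', c (f k') k') * G (f k) = ∑ j, c j k * G j := by
  have key := Finset.prod_univ_sum (fun _ : Fin D => (Finset.univ : Finset (Fin d)))
      (fun k' j' => c j' k' * (if k' = k then G j' else 1))
  rw [Fintype.piFinset_univ] at key
  calc ∑ f : Fin D → Fin d, (∏ k', c (f k') k') * G (f k)
      = ∑ f : Fin D → Fin d, ∏ k', c (f k') k' * (if k' = k then G (f k') else 1) := by
        refine Finset.sum_congr rfl fun f _ => ?_
        rw [Finset.prod_mul_distrib, Finset.prod_ite_eq']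
        simp
    _ = ∏ k', ∑ j', c j' k' * (if k' = k then G j' else 1) := key.symm
    _ = ∑ j, c j k * G j := by
        rw [Finset.prod_eq_single k]
        · simp
        · intro k' _ hk'; simp [hk', hc k']
        · simp

lemma wsum_one {D d : ℕ} (c : Fin d → Fin D → ℝ) (hc : ∀ k, ∑ j, c j k = 1) :
    ∑ f : Fin D → Fin d, (∏ k', c (f k') k') = 1 := by
  have key := Finset.prod_univ_sum (fun _ : Fin D => (Finset.univ : Finset (Fin d)))
      (fun k' j' => c j' k')
  rw [Fintype.piFinset_univ] at key
  rw [← key]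
  simp [hc]

lemma trace_mul_diag {d : ℕ} (A : Matrix (Fin d) (Fin d) ℂ) (v : Fin d → ℂ) :
    (A * Matrix.diagonal v).trace = ∑ j, A j j * v j := by
  simp [Matrix.trace, Matrix.diag, Matrix.mul_diagonal]

lemma conj_diag_entry {D d : ℕ} (K : Matrix (Fin d) (Fin D) ℂ) (v : Fin D → ℂ) (j : Fin d) :
    (K * Matrix.diagonal v * Kᴴ) j j = ∑ k, v k * ((Complex.normSq (K j k) : ℝ) : ℂ) := by
  rw [Matrix.mul_apply]
  refine Finset.sum_congr rfl fun k _ => ?_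
  rw [Matrix.mul_diagonal, Matrix.conjTranspose_apply]
  rw [mul_comm (K j k) (v k), mul_assoc]
  congr 1
  exact Complex.mul_conj _

lemma channel_trace {D d : ℕ} (κ : ℕ) (K : Fin κ → Matrix (Fin d) (Fin D) ℂ)
    (mm : Fin d → ℝ) (v : Fin D → ℝ) :
    ((∑ t, K t * Matrix.diagonal (fun k => ((v k : ℝ) : ℂ)) * (K t)ᴴ)
        * Matrix.diagonal (fun j => ((mm j : ℝ) : ℂ))).trace
      = ((∑ j, ∑ k, mm j * (∑ t, Complex.normSq (K t j k)) * v k : ℝ) : ℂ) := by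
  rw [trace_mul_diag]
  push_cast
  refine Finset.sum_congr rfl fun j _ => ?_
  rw [Matrix.sum_apply]
  simp_rw [conj_diag_entry]
  push_cast
  simp_rw [Finset.sum_mul, Finset.mul_sum]
  rw [Finset.sum_comm]
  refine Finset.sum_congr rfl fun k _ => ?_
  rw [Finset.sum_mul]
  exact Finset.sum_congr rfl fun t _ => by ring

lemma kraus_col_sum {D d : ℕ} (κ : ℕ) (K : Fin κ → Matrix (Fin d) (Fin D) ℂ)
    (hK : ∑ t, (K t)ᴴ * K t = 1) (k : Fin D) :
    ∑ j, ∑ t, Complex.normSq (K t j k) = 1 := by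
  have h1 : ((∑ t, (K t)ᴴ * K t) : Matrix (Fin D) (Fin D) ℂ) k k = 1 := by
    rw [hK, Matrix.one_apply_eq]
  rw [Matrix.sum_apply] at h1
  have h2 : ∀ t, ((K t)ᴴ * K t) k k = ((∑ j, Complex.normSq (K t j k) : ℝ) : ℂ) := by
    intro t
    rw [Matrix.mul_apply]
    push_cast
    refine Finset.sum_congr rfl fun j _ => ?_
    rw [Matrix.conjTranspose_apply]
    rw [mul_comm]
    exact Complex.mul_conj _
  simp_rw [h2] at h1
  rw [Finset.sum_comm]
  have : ((∑ t, ∑ j, Complex.normSq (K t j k) : ℝ) : ℂ) = 1 := by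
    rw [Complex.ofReal_sum]; exact h1
  exact_mod_cast this

lemma std_entry {m n : Type*} [DecidableEq m] [DecidableEq n] (i : m) (j : n) (a : ℂ) (i' : m) (j' : n) :
    Matrix.single i j a i' j' = if i = i' ∧ j = j' then a else 0 := rfl

lemma std_conjT {m n : Type*} [DecidableEq m] [DecidableEq n] (i : m) (j : n) (a : ℂ) :
    (Matrix.single i j a)ᴴ = Matrix.single j i (star a) := by
  ext p q
  simp only [Matrix.conjTranspose_apply, std_entry]
  by_cases h1 : i = q <;> by_cases h2 : j = p <;> simp [h1, h2]

lemma det_kraus_sum {D d : ℕ} (f : Fin D → Fin d) :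
    ∑ k : Fin D, (Matrix.single (f k) k (1:ℂ))ᴴ * Matrix.single (f k) k (1:ℂ)
      = 1 := by
  have h : ∀ k : Fin D, (Matrix.single (f k) k (1:ℂ))ᴴ * Matrix.single (f k) k (1:ℂ)
      = Matrix.single k k (1:ℂ) := by
    intro k
    rw [std_conjT]
    ext a b
    simp only [Matrix.mul_apply, std_entry, star_one]
    by_cases h1 : k = a <;> by_cases h2 : k = b <;>
      simp [h1, h2, ite_and, Finset.sum_ite_eq, Finset.sum_ite_eq']
  rw [Finset.sum_congr rfl fun k _ => h k]
  ext a b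
  simp only [Matrix.sum_apply, std_entry, Matrix.one_apply]
  by_cases hab : a = b
  · subst hab; simp
  · rw [if_neg hab]
    apply Finset.sum_eq_zero; intro k _
    rw [if_neg]; rintro ⟨rfl, rfl⟩; exact hab rfl

lemma det_conj {D d : ℕ} (f : Fin D → Fin d) (k : Fin D) (σ : Matrix (Fin D) (Fin D) ℂ) :
    Matrix.single (f k) k (1:ℂ) * σ * (Matrix.single (f k) k (1:ℂ))ᴴ
      = Matrix.single (f k) (f k) (σ k k) := by
  rw [std_conjT]
  ext a b
  simp only [Matrix.mul_apply, std_entry, star_one]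
  by_cases h1 : f k = a <;> by_cases h2 : f k = b <;>
    simp [h1, h2, ite_and, Finset.sum_ite_eq, Finset.sum_ite_eq']

lemma det_apply {D d : ℕ} (f : Fin D → Fin d) (σ : Matrix (Fin D) (Fin D) ℂ) :
    ∑ l, ∑ k, Matrix.single l l ((((if f k = l then (1:ℝ) else 0) : ℝ) : ℂ) * σ k k)
      = ∑ k, Matrix.single (f k) k (1:ℂ) * σ * (Matrix.single (f k) k (1:ℂ))ᴴ := by
  rw [Finset.sum_comm]
  refine Finset.sum_congr rfl fun k _ => ?_
  rw [det_conj]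
  rw [Finset.sum_eq_single (f k)]
  · simp
  · intro l _ hl
    rw [if_neg (Ne.symm hl)]
    simp [Matrix.single_zero]
  · simp

lemma det_c {D d : ℕ} (f : Fin D → Fin d) (j : Fin d) (k : Fin D) :
    (∑ k' : Fin D, Complex.normSq ((Matrix.single (f k') k' (1:ℂ)) j k))
      = if f k = j then 1 else 0 := by
  rw [Finset.sum_eq_single k]
  · by_cases h : f k = j <;> simp [std_entry, h]
  · intro k' _ hk'; simp [std_entry, hk']
  · simp

lemma collapse {D d r : ℕ} (m : Fin r → Fin d → ℝ) (f : Fin D → Fin d) (v : Fin D → ℝ) (i : Fin r) :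
    ∑ j, ∑ k, m i j * (if f k = j then (1:ℝ) else 0) * v k = ∑ k, m i (f k) * v k := by
  rw [Finset.sum_comm]
  refine Finset.sum_congr rfl fun k _ => ?_
  rw [Finset.sum_eq_single (f k)]
  · simp
  · intro j _ hj; simp [Ne.symm hj]
  · simp

lemma channel_fisher {D d r : ℕ} (κ : ℕ) (K : Fin κ → Matrix (Fin d) (Fin D) ℂ)
    (E : Matrix (Fin D) (Fin D) ℂ → Matrix (Fin d) (Fin d) ℂ)
    (hE : ∀ σ, E σ = ∑ t, K t * σ * (K t)ᴴ)
    (m : Fin r → Fin d → ℝ) (M : Fin r → Matrix (Fin d) (Fin d) ℂ)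
    (hMdef : ∀ i, M i = Matrix.diagonal fun j => ((m i j : ℝ) : ℂ))
    (v v' : Fin D → ℝ) :
    FisherInfo (E (Matrix.diagonal fun k => ((v k : ℝ) : ℂ)))
        (E (Matrix.diagonal fun k => ((v' k : ℝ) : ℂ))) M
      = classFisher (fun i => ∑ j, ∑ k, m i j * (∑ t, Complex.normSq (K t j k)) * v k)
          (fun i => ∑ j, ∑ k, m i j * (∑ t, Complex.normSq (K t j k)) * v' k) := by
  unfold FisherInfo classFisher
  refine Finset.sum_congr rfl fun i _ => ?_
  rw [hE, hE, hMdef i, channel_trace, channel_trace]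
  simp only [Complex.ofReal_eq_zero, Complex.ofReal_re]

lemma classFisher_le {D d r : ℕ} (c : Fin d → Fin D → ℝ) (hc0 : ∀ j k, 0 ≤ c j k)
    (hc1 : ∀ k, ∑ j, c j k = 1) (m : Fin r → Fin d → ℝ) (hm : ∀ i j, 0 ≤ m i j)
    (v v' : Fin D → ℝ) (hv : ∀ k, 0 ≤ v k) (hv0 : ∀ k, v k = 0 → v' k = 0)
    (fs : Fin D → Fin d)
    (hfs : ∀ f : Fin D → Fin d,
      classFisher (fun i => ∑ k, m i (f k) * v k) (fun i => ∑ k, m i (f k) * v' k)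
        ≤ classFisher (fun i => ∑ k, m i (fs k) * v k) (fun i => ∑ k, m i (fs k) * v' k)) :
    classFisher (fun i => ∑ j, ∑ k, m i j * c j k * v k)
        (fun i => ∑ j, ∑ k, m i j * c j k * v' k)
      ≤ classFisher (fun i => ∑ k, m i (fs k) * v k) (fun i => ∑ k, m i (fs k) * v' k) := by
  set w : (Fin D → Fin d) → ℝ := fun f => ∏ k', c (f k') k' with hwdef
  have hw0 : ∀ f, 0 ≤ w f := fun f => Finset.prod_nonneg fun k' _ => hc0 _ _
  have hw1 : ∑ f, w f = 1 := wsum_one c hc1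
  have hp : ∀ (v0 : Fin D → ℝ) (i : Fin r),
      (∑ j, ∑ k, m i j * c j k * v0 k) = ∑ f, w f * (∑ k, m i (f k) * v0 k) := by
    intro v0 i
    calc ∑ j, ∑ k, m i j * c j k * v0 k
        = ∑ k, ∑ j, c j k * (m i j * v0 k) := by
          rw [Finset.sum_comm]
          exact Finset.sum_congr rfl fun k _ => Finset.sum_congr rfl fun j _ => by ring
      _ = ∑ k, ∑ f : Fin D → Fin d, (∏ k', c (f k') k') * (m i (f k) * v0 k) := by
          exact Finset.sum_congr rfl fun k _ => (marginal c hc1 k _).symm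
      _ = ∑ f : Fin D → Fin d, w f * (∑ k, m i (f k) * v0 k) := by
          rw [Finset.sum_comm]
          exact Finset.sum_congr rfl fun f _ => by rw [Finset.mul_sum]
  have hqnn : ∀ (f : Fin D → Fin d) i, 0 ≤ ∑ k, m i (f k) * v k :=
    fun f i => Finset.sum_nonneg fun k _ => mul_nonneg (hm i (f k)) (hv k)
  have hq0 : ∀ (f : Fin D → Fin d) i,
      (∑ k, m i (f k) * v k) = 0 → (∑ k, m i (f k) * v' k) = 0 := by
    intro f i h0
    have hterm := (Finset.sum_eq_zero_iff_of_nonneg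
      (fun k _ => mul_nonneg (hm i (f k)) (hv k))).mp h0
    apply Finset.sum_eq_zero; intro k _
    rcases mul_eq_zero.mp (hterm k (Finset.mem_univ k)) with h | h
    · rw [h, zero_mul]
    · rw [hv0 k h, mul_zero]
  calc classFisher (fun i => ∑ j, ∑ k, m i j * c j k * v k)
          (fun i => ∑ j, ∑ k, m i j * c j k * v' k)
      ≤ ∑ f : Fin D → Fin d,
          w f * classFisher (fun i => ∑ k, m i (f k) * v k) (fun i => ∑ k, m i (f k) * v' k) := by
        unfold classFisher
        have step : ∀ i : Fin r,
            (if (∑ j, ∑ k, m i j * c j k * v k) = 0 then (0:ℝ)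
              else (∑ j, ∑ k, m i j * c j k * v' k)^2 / (∑ j, ∑ k, m i j * c j k * v k))
            ≤ ∑ f : Fin D → Fin d, w f *
                (if (∑ k, m i (f k) * v k) = 0 then 0
                  else (∑ k, m i (f k) * v' k)^2 / (∑ k, m i (f k) * v k)) := by
          intro i
          rw [hp v i, hp v' i]
          exact perspective_le w (fun f => ∑ k, m i (f k) * v k)
            (fun f => ∑ k, m i (f k) * v' k) hw0 (fun f => hqnn f i) (fun f => hq0 f i)
        calc (∑ i, if (∑ j, ∑ k, m i j * c j k * v k) = 0 then (0:ℝ)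
                else (∑ j, ∑ k, m i j * c j k * v' k)^2 / (∑ j, ∑ k, m i j * c j k * v k))
            ≤ ∑ i, ∑ f : Fin D → Fin d, w f *
                (if (∑ k, m i (f k) * v k) = 0 then 0
                  else (∑ k, m i (f k) * v' k)^2 / (∑ k, m i (f k) * v k)) :=
              Finset.sum_le_sum fun i _ => step i
          _ = ∑ f : Fin D → Fin d, w f *
                ∑ i, (if (∑ k, m i (f k) * v k) = 0 then (0:ℝ)
                  else (∑ k, m i (f k) * v' k)^2 / (∑ k, m i (f k) * v k)) := by
              rw [Finset.sum_comm]
              exact Finset.sum_congr rfl fun f _ => by rw [Finset.mul_sum]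
    _ ≤ ∑ f : Fin D → Fin d, w f *
          classFisher (fun i => ∑ k, m i (fs k) * v k) (fun i => ∑ k, m i (fs k) * v' k) :=
        Finset.sum_le_sum fun f _ => mul_le_mul_of_nonneg_left (hfs f) (hw0 f)
    _ = classFisher (fun i => ∑ k, m i (fs k) * v k) (fun i => ∑ k, m i (fs k) * v' k) := by
        rw [← Finset.sum_mul, hw1, one_mul]

/-- for a classically mixed state family and a commuting-operator measurement,
the QPFI is attained by a coarse-graining channel determined by a coarse-graining stochastic
matrix (each column has exactly one entry 1 and the rest 0). -/
theorem stmt15 {D d r : ℕ} (hD : 1 ≤ D) (hd : 1 ≤ d) (hr : 1 ≤ r)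
    (lam : ℝ → Fin D → ℝ) (lam' : Fin D → ℝ) (θ₀ : ℝ)
    (hnn : ∀ θ j, 0 ≤ lam θ j) (hlsum : ∀ θ, ∑ j, lam θ j = 1)
    (hder : ∀ j, HasDerivAt (fun θ => lam θ j) (lam' j) θ₀)
    (m : Fin r → Fin d → ℝ) (hm : ∀ i j, 0 ≤ m i j) (hmsum : ∀ j, ∑ i, m i j = 1)
    (M : Fin r → Matrix (Fin d) (Fin d) ℂ)
    (hMdef : ∀ i, M i = Matrix.diagonal fun j => ((m i j : ℝ) : ℂ)) :
    ∃ P : Matrix (Fin d) (Fin D) ℝ,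
      (∀ l k, P l k = 0 ∨ P l k = 1) ∧ (∀ k, ∑ l, P l k = 1) ∧
      ∃ E : Matrix (Fin D) (Fin D) ℂ → Matrix (Fin d) (Fin d) ℂ,
        (∀ σ, E σ = ∑ l, ∑ k, Matrix.single l l (((P l k : ℝ) : ℂ) * σ k k)) ∧
        IsQuantumChannel E ∧
        FisherInfo (E (Matrix.diagonal fun j => ((lam θ₀ j : ℝ) : ℂ)))
            (E (Matrix.diagonal fun j => ((lam' j : ℝ) : ℂ))) M
          = QPFI (Matrix.diagonal fun j => ((lam θ₀ j : ℝ) : ℂ))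
              (Matrix.diagonal fun j => ((lam' j : ℝ) : ℂ)) M := by
  haveI : Nonempty (Fin d) := Fin.pos_iff_nonempty.mp hd
  have hzero : ∀ k, lam θ₀ k = 0 → lam' k = 0 := by
    intro k hk
    have hmin : IsMinOn (fun θ => lam θ k) Set.univ θ₀ := by
      intro θ _
      simp only [Set.mem_setOf_eq, hk]
      exact hnn θ k
    exact (hmin.isLocalMin Filter.univ_mem).hasDerivAt_eq_zero (hder k)
  obtain ⟨fs, -, hfs⟩ := Finset.exists_max_image (Finset.univ : Finset (Fin D → Fin d))
      (fun f => classFisher (fun i => ∑ k, m i (f k) * lam θ₀ k)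
        (fun i => ∑ k, m i (f k) * lam' k)) Finset.univ_nonempty
  have hfs' : ∀ f : Fin D → Fin d,
      classFisher (fun i => ∑ k, m i (f k) * lam θ₀ k) (fun i => ∑ k, m i (f k) * lam' k)
        ≤ classFisher (fun i => ∑ k, m i (fs k) * lam θ₀ k)
            (fun i => ∑ k, m i (fs k) * lam' k) :=
    fun f => hfs f (Finset.mem_univ f)
  refine ⟨fun l k => if fs k = l then 1 else 0, ?_, ?_, ?_⟩
  · intro l k; by_cases h : fs k = l <;> simp [h]
  · intro k; simp [Finset.sum_ite_eq]
  refine ⟨fun σ => ∑ l, ∑ k, Matrix.single l l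
      ((((if fs k = l then (1:ℝ) else 0) : ℝ) : ℂ) * σ k k), fun σ => rfl, ?_, ?_⟩
  · exact ⟨D, fun k => Matrix.single (fs k) k 1, det_kraus_sum fs,
      fun σ => det_apply fs σ⟩
  · have hv1 := channel_fisher D (fun t => Matrix.single (fs t) t (1:ℂ))
      (fun σ => ∑ l, ∑ k, Matrix.single l l
        ((((if fs k = l then (1:ℝ) else 0) : ℝ) : ℂ) * σ k k))
      (fun σ => det_apply fs σ) m M hMdef (lam θ₀) lam'
    have hc : ∀ v0 : Fin D → ℝ,
        (fun i => ∑ j, ∑ k, m i j *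
            (∑ t, Complex.normSq ((Matrix.single (fs t) t (1:ℂ)) j k)) * v0 k)
          = fun i => ∑ k, m i (fs k) * v0 k := by
      intro v0
      funext i
      rw [← collapse m fs v0 i]
      exact Finset.sum_congr rfl fun j _ => Finset.sum_congr rfl fun k _ => by rw [det_c]
    rw [hv1, hc (lam θ₀), hc lam']
    have hgreat : IsGreatest {x : ℝ |
        ∃ E : Matrix (Fin D) (Fin D) ℂ → Matrix (Fin d) (Fin d) ℂ, IsQuantumChannel E ∧
          x = FisherInfo (E (Matrix.diagonal fun j => ((lam θ₀ j : ℝ) : ℂ)))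
              (E (Matrix.diagonal fun j => ((lam' j : ℝ) : ℂ))) M}
        (classFisher (fun i => ∑ k, m i (fs k) * lam θ₀ k)
          (fun i => ∑ k, m i (fs k) * lam' k)) := by
      constructor
      · refine ⟨fun σ => ∑ l, ∑ k, Matrix.single l l
            ((((if fs k = l then (1:ℝ) else 0) : ℝ) : ℂ) * σ k k),
          ⟨D, fun k => Matrix.single (fs k) k 1, det_kraus_sum fs,
            fun σ => det_apply fs σ⟩, ?_⟩
        rw [hv1, hc (lam θ₀), hc lam']
      · rintro x ⟨E2, ⟨κ, K, hK, hE2⟩, rfl⟩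
        rw [channel_fisher κ K E2 hE2 m M hMdef (lam θ₀) lam']
        exact classFisher_le (fun j k => ∑ t, Complex.normSq (K t j k))
          (fun j k => Finset.sum_nonneg fun t _ => Complex.normSq_nonneg _)
          (kraus_col_sum κ K hK) m hm (lam θ₀) lam' (fun k => hnn θ₀ k) hzero fs hfs'
    exact (IsGreatest.csSup_eq hgreat).symm
end
end
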